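/- arXiv:2209.00837 — 3 statements merged into one kernel-verified Lean document; each statement's English description precedes it below -/
import Mathlib

section
/- Let V be the vector space over ℚ with basis indexed by all matchings of [n], and let K be the subspace spanned by all elements of the form m₁ + m₂ + m₃ where m₁, m₂, m₃ are three matchings that agree except on four elements a₁ < a₂ < a₃ < a₄, on which they contain respectively the pairs {a₁,a₂},{a₃,a₄}; {a₁,a₃},{a₂,a₄}; {a₁,a₄},{a₂,a₃}. Then K is invariant under the sign-twisted S_n-action σ∘m = sign(σ)·(σ⋆m) extended linearly. -/
def IsMatching (n : ℕ) (m : Finset (Finset (Fin n))) : Prop :=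
  (∀ p ∈ m, p.card = 2) ∧ (m : Set (Finset (Fin n))).Pairwise fun p q => Disjoint p q

def mstar {n : ℕ} (σ : Equiv.Perm (Fin n)) (m : Finset (Finset (Fin n))) :
    Finset (Finset (Fin n)) :=
  m.image (Finset.image σ)

/-- The subspace of the free vector space on matchings spanned by the Ptolemy sums
`m₁ + m₂ + m₃`, where `m₁, m₂, m₃` agree except on four elements `a₁ < a₂ < a₃ < a₄` where
they contain the pairs `{a₁,a₂},{a₃,a₄}`; `{a₁,a₃},{a₂,a₄}`; `{a₁,a₄},{a₂,a₃}`. -/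
noncomputable def K (n : ℕ) : Submodule ℚ (Finset (Finset (Fin n)) →₀ ℚ) :=
  Submodule.span ℚ
    {f | ∃ (r : Finset (Finset (Fin n))) (a₁ a₂ a₃ a₄ : Fin n),
      a₁ < a₂ ∧ a₂ < a₃ ∧ a₃ < a₄ ∧
      (∀ p ∈ r, a₁ ∉ p ∧ a₂ ∉ p ∧ a₃ ∉ p ∧ a₄ ∉ p) ∧
      IsMatching n (r ∪ {({a₁, a₂} : Finset (Fin n)), ({a₃, a₄} : Finset (Fin n))}) ∧
      IsMatching n (r ∪ {({a₁, a₃} : Finset (Fin n)), ({a₂, a₄} : Finset (Fin n))}) ∧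
      IsMatching n (r ∪ {({a₁, a₄} : Finset (Fin n)), ({a₂, a₃} : Finset (Fin n))}) ∧
      f = Finsupp.single (r ∪ {({a₁, a₂} : Finset (Fin n)), ({a₃, a₄} : Finset (Fin n))}) 1
        + Finsupp.single (r ∪ {({a₁, a₃} : Finset (Fin n)), ({a₂, a₄} : Finset (Fin n))}) 1
        + Finsupp.single (r ∪ {({a₁, a₄} : Finset (Fin n)), ({a₂, a₃} : Finset (Fin n))}) 1}

lemma fin4_key (j₁ j₂ j₃ j₄ : Fin 4) (h12 : j₁ ≠ j₂) (h13 : j₁ ≠ j₃) (h14 : j₁ ≠ j₄)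
    (h23 : j₂ ≠ j₃) (h24 : j₂ ≠ j₄) (h34 : j₃ ≠ j₄) :
    ({ {{j₁,j₂},{j₃,j₄}}, {{j₁,j₃},{j₂,j₄}}, {{j₁,j₄},{j₂,j₃}} } :
      Multiset (Finset (Finset (Fin 4)))) =
    { {{0,1},{2,3}}, {{0,2},{1,3}}, {{0,3},{1,2}} } := by revert j₁ j₂ j₃ j₄; decide

lemma isMatching_mstar {n : ℕ} (σ : Equiv.Perm (Fin n)) {m : Finset (Finset (Fin n))}
    (h : IsMatching n m) : IsMatching n (mstar σ m) := by
  obtain ⟨h1, h2⟩ := h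
  constructor
  · intro p hp
    rw [mstar, Finset.mem_image] at hp
    obtain ⟨q, hq, rfl⟩ := hp
    rw [Finset.card_image_of_injective _ σ.injective]
    exact h1 q hq
  · intro p hp q hq hne
    rw [Finset.mem_coe, mstar, Finset.mem_image] at hp hq
    obtain ⟨p', hp', rfl⟩ := hp
    obtain ⟨q', hq', rfl⟩ := hq
    have hpq : p' ≠ q' := by rintro rfl; exact hne rfl
    exact (Finset.disjoint_image σ.injective).mpr (h2 hp' hq' hpq)

lemma gen_image_mem (n : ℕ) (σ : Equiv.Perm (Fin n)) (r : Finset (Finset (Fin n))) (a₁ a₂ a₃ a₄ : Fin n)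
    (h12 : a₁ < a₂) (h23 : a₂ < a₃) (h34 : a₃ < a₄)
    (hr : ∀ p ∈ r, a₁ ∉ p ∧ a₂ ∉ p ∧ a₃ ∉ p ∧ a₄ ∉ p)
    (hM1 : IsMatching n (r ∪ {({a₁, a₂} : Finset (Fin n)), ({a₃, a₄} : Finset (Fin n))}))
    (hM2 : IsMatching n (r ∪ {({a₁, a₃} : Finset (Fin n)), ({a₂, a₄} : Finset (Fin n))}))
    (hM3 : IsMatching n (r ∪ {({a₁, a₄} : Finset (Fin n)), ({a₂, a₃} : Finset (Fin n))})) :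
    ∃ (r' : Finset (Finset (Fin n))) (b₁ b₂ b₃ b₄ : Fin n),
      b₁ < b₂ ∧ b₂ < b₃ ∧ b₃ < b₄ ∧
      (∀ p ∈ r', b₁ ∉ p ∧ b₂ ∉ p ∧ b₃ ∉ p ∧ b₄ ∉ p) ∧
      IsMatching n (r' ∪ {({b₁, b₂} : Finset (Fin n)), ({b₃, b₄} : Finset (Fin n))}) ∧
      IsMatching n (r' ∪ {({b₁, b₃} : Finset (Fin n)), ({b₂, b₄} : Finset (Fin n))}) ∧
      IsMatching n (r' ∪ {({b₁, b₄} : Finset (Fin n)), ({b₂, b₃} : Finset (Fin n))}) ∧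
      (Finsupp.single (mstar σ (r ∪ {({a₁, a₂} : Finset (Fin n)), ({a₃, a₄} : Finset (Fin n))})) (1:ℚ)
        + Finsupp.single (mstar σ (r ∪ {({a₁, a₃} : Finset (Fin n)), ({a₂, a₄} : Finset (Fin n))})) 1
        + Finsupp.single (mstar σ (r ∪ {({a₁, a₄} : Finset (Fin n)), ({a₂, a₃} : Finset (Fin n))})) 1)
      = Finsupp.single (r' ∪ {({b₁, b₂} : Finset (Fin n)), ({b₃, b₄} : Finset (Fin n))}) 1
        + Finsupp.single (r' ∪ {({b₁, b₃} : Finset (Fin n)), ({b₂, b₄} : Finset (Fin n))}) 1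
        + Finsupp.single (r' ∪ {({b₁, b₄} : Finset (Fin n)), ({b₂, b₃} : Finset (Fin n))}) 1 := by
  -- distinctness of the aᵢ and their images
  have ha12 : a₁ ≠ a₂ := h12.ne
  have ha13 : a₁ ≠ a₃ := (h12.trans h23).ne
  have ha14 : a₁ ≠ a₄ := (h12.trans (h23.trans h34)).ne
  have ha23 : a₂ ≠ a₃ := h23.ne
  have ha24 : a₂ ≠ a₄ := (h23.trans h34).ne
  have ha34 : a₃ ≠ a₄ := h34.ne
  set x₁ := σ a₁ with hx1
  set x₂ := σ a₂ with hx2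
  set x₃ := σ a₃ with hx3
  set x₄ := σ a₄ with hx4
  have hd12 : x₁ ≠ x₂ := fun h => ha12 (σ.injective h)
  have hd13 : x₁ ≠ x₃ := fun h => ha13 (σ.injective h)
  have hd14 : x₁ ≠ x₄ := fun h => ha14 (σ.injective h)
  have hd23 : x₂ ≠ x₃ := fun h => ha23 (σ.injective h)
  have hd24 : x₂ ≠ x₄ := fun h => ha24 (σ.injective h)
  have hd34 : x₃ ≠ x₄ := fun h => ha34 (σ.injective h)
  set t : Finset (Fin n) := {x₁, x₂, x₃, x₄} with ht
  have htc : t.card = 4 := by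
    rw [ht]
    rw [Finset.card_insert_of_notMem (by simp [hd12, hd13, hd14]),
      Finset.card_insert_of_notMem (by simp [hd23, hd24]),
      Finset.card_insert_of_notMem (by simp [hd34]), Finset.card_singleton]
  set e := t.orderEmbOfFin htc with he
  -- each xᵢ is in the range of e
  have hrange : ∀ x ∈ t, ∃ j, e j = x := by
    intro x hx
    have : x ∈ Set.range e := by rw [he, Finset.range_orderEmbOfFin]; exact hx
    exact this
  obtain ⟨j₁, hj₁⟩ := hrange x₁ (by simp [ht])
  obtain ⟨j₂, hj₂⟩ := hrange x₂ (by simp [ht])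
  obtain ⟨j₃, hj₃⟩ := hrange x₃ (by simp [ht])
  obtain ⟨j₄, hj₄⟩ := hrange x₄ (by simp [ht])
  have einj : Function.Injective e := e.injective
  have hj12 : j₁ ≠ j₂ := fun h => hd12 (by rw [← hj₁, ← hj₂, h])
  have hj13 : j₁ ≠ j₃ := fun h => hd13 (by rw [← hj₁, ← hj₃, h])
  have hj14 : j₁ ≠ j₄ := fun h => hd14 (by rw [← hj₁, ← hj₄, h])
  have hj23 : j₂ ≠ j₃ := fun h => hd23 (by rw [← hj₂, ← hj₃, h])
  have hj24 : j₂ ≠ j₄ := fun h => hd24 (by rw [← hj₂, ← hj₄, h])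
  have hj34 : j₃ ≠ j₄ := fun h => hd34 (by rw [← hj₃, ← hj₄, h])
  have key4 := fin4_key j₁ j₂ j₃ j₄ hj12 hj13 hj14 hj23 hj24 hj34
  set r' : Finset (Finset (Fin n)) := r.image (Finset.image σ) with hr'
  -- the multiset equality on Fin n
  have key : ({ {({x₁,x₂} : Finset (Fin n)),({x₃,x₄} : Finset (Fin n))},
        {({x₁,x₃} : Finset (Fin n)),({x₂,x₄} : Finset (Fin n))},
        {({x₁,x₄} : Finset (Fin n)),({x₂,x₃} : Finset (Fin n))} } :
      Multiset (Finset (Finset (Fin n)))) =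
      { {({e 0, e 1} : Finset (Fin n)),({e 2, e 3} : Finset (Fin n))},
        {({e 0, e 2} : Finset (Fin n)),({e 1, e 3} : Finset (Fin n))},
        {({e 0, e 3} : Finset (Fin n)),({e 1, e 2} : Finset (Fin n))} } := by
    have := congrArg (Multiset.map (Finset.image (Finset.image (e : Fin 4 → Fin n)))) key4
    simpa [Multiset.insert_eq_cons, Finset.image_insert, hj₁, hj₂, hj₃, hj₄] using this
  have hm1 : mstar σ (r ∪ {({a₁,a₂} : Finset (Fin n)),({a₃,a₄} : Finset (Fin n))})
      = r' ∪ {({x₁,x₂} : Finset (Fin n)),({x₃,x₄} : Finset (Fin n))} := by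
    simp [mstar, Finset.image_union, Finset.image_insert, hr', hx1, hx2, hx3, hx4]
  have hm2 : mstar σ (r ∪ {({a₁,a₃} : Finset (Fin n)),({a₂,a₄} : Finset (Fin n))})
      = r' ∪ {({x₁,x₃} : Finset (Fin n)),({x₂,x₄} : Finset (Fin n))} := by
    simp [mstar, Finset.image_union, Finset.image_insert, hr', hx1, hx2, hx3, hx4]
  have hm3 : mstar σ (r ∪ {({a₁,a₄} : Finset (Fin n)),({a₂,a₃} : Finset (Fin n))})
      = r' ∪ {({x₁,x₄} : Finset (Fin n)),({x₂,x₃} : Finset (Fin n))} := by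
    simp [mstar, Finset.image_union, Finset.image_insert, hr', hx1, hx2, hx3, hx4]
  have msEq := congrArg (Multiset.map (fun m => r' ∪ m)) key
  simp only [Multiset.insert_eq_cons, Multiset.map_cons, Multiset.map_singleton] at msEq
  have hall : ∀ g ∈ ((r' ∪ {({e 0, e 1} : Finset (Fin n)),({e 2, e 3} : Finset (Fin n))}) ::ₘ
      (r' ∪ {({e 0, e 2} : Finset (Fin n)),({e 1, e 3} : Finset (Fin n))}) ::ₘ
      ({(r' ∪ {({e 0, e 3} : Finset (Fin n)),({e 1, e 2} : Finset (Fin n))})} :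
        Multiset (Finset (Finset (Fin n))))), IsMatching n g := by
    rw [← msEq]
    intro g hg
    simp only [Multiset.mem_cons, Multiset.mem_singleton] at hg
    rcases hg with rfl|rfl|rfl
    · rw [← hm1]; exact isMatching_mstar σ hM1
    · rw [← hm2]; exact isMatching_mstar σ hM2
    · rw [← hm3]; exact isMatching_mstar σ hM3
  refine ⟨r', e 0, e 1, e 2, e 3, ?_, ?_, ?_, ?_, ?_, ?_, ?_, ?_⟩
  · exact e.strictMono (by decide)
  · exact e.strictMono (by decide)
  · exact e.strictMono (by decide)
  · -- avoidance
    have hav : ∀ x ∈ t, ∀ p ∈ r', x ∉ p := by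
      intro x hx p hp hxp
      rw [hr', Finset.mem_image] at hp
      obtain ⟨q, hq, rfl⟩ := hp
      rw [Finset.mem_image] at hxp
      obtain ⟨y, hy, rfl⟩ := hxp
      obtain ⟨n1, n2, n3, n4⟩ := hr q hq
      simp only [ht, hx1, hx2, hx3, hx4, Finset.mem_insert, Finset.mem_singleton] at hx
      rcases hx with h|h|h|h
      · exact n1 (σ.injective h ▸ hy)
      · exact n2 (σ.injective h ▸ hy)
      · exact n3 (σ.injective h ▸ hy)
      · exact n4 (σ.injective h ▸ hy)
    intro p hp
    exact ⟨hav _ (Finset.orderEmbOfFin_mem t htc 0) p hp,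
      hav _ (Finset.orderEmbOfFin_mem t htc 1) p hp,
      hav _ (Finset.orderEmbOfFin_mem t htc 2) p hp,
      hav _ (Finset.orderEmbOfFin_mem t htc 3) p hp⟩
  · exact hall _ (by simp)
  · exact hall _ (by simp)
  · exact hall _ (by simp)
  have hsum := congrArg
    (fun ms => (Multiset.map (fun m => Finsupp.single m (1:ℚ)) ms).sum) msEq
  simp only [Multiset.map_cons, Multiset.map_singleton, Multiset.sum_cons,
    Multiset.sum_singleton] at hsum
  rw [hm1, hm2, hm3]
  simpa [add_assoc] using hsum


/-- `K` is invariant under the sign-twisted `S_n`-action `σ ∘ m = sign(σ)·(σ ⋆ m)`,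
extended linearly. -/
theorem K_invariant (n : ℕ) (σ : Equiv.Perm (Fin n)) (v : Finset (Finset (Fin n)) →₀ ℚ)
    (hv : v ∈ K n) :
    ((Equiv.Perm.sign σ : ℤ) : ℚ) • Finsupp.mapDomain (mstar σ) v ∈ K n := by
  have hmap : Finsupp.mapDomain (mstar σ) v ∈ K n := by
    have hle : (K n).map (Finsupp.lmapDomain ℚ ℚ (mstar σ)) ≤ K n := by
      rw [K, Submodule.map_span, Submodule.span_le]
      rintro f ⟨g, hg, rfl⟩
      obtain ⟨r, a₁, a₂, a₃, a₄, h12, h23, h34, hr, hM1, hM2, hM3, rfl⟩ := hg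
      obtain ⟨r', b₁, b₂, b₃, b₄, k1, k2, k3, k4, k5, k6, k7, keq⟩ :=
        gen_image_mem n σ r a₁ a₂ a₃ a₄ h12 h23 h34 hr hM1 hM2 hM3
      apply Submodule.subset_span (R := ℚ)
      refine ⟨r', b₁, b₂, b₃, b₄, k1, k2, k3, k4, k5, k6, k7, ?_⟩
      simp only [Finsupp.lmapDomain_apply, Finsupp.mapDomain_add, Finsupp.mapDomain_single]
      exact keq
    exact hle (Submodule.mem_map.mpr ⟨v, hv, rfl⟩)
  exact Submodule.smul_mem _ _ hmap
end

section
/- In the ring M_n, for every matching m of [n], the product ∏_{{a,b} ∈ m} x_{a,b} equals, up to sign, a ℤ-linear combination of products ∏_{{a,b} ∈ m'} x_{a,b} over noncrossing matchings m' of [n]; in fact the images of the monomials indexed by noncrossing matchings span M_n as a vector space. -/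
open MvPolynomial

set_option synthInstance.maxHeartbeats 1000000
set_option maxHeartbeats 1000000

/-- The defining relations of the ring `M_n`: diagonal generators vanish, `x_{a,b}² = 0`,
`x_{a,b}·x_{a,c} = 0` for distinct `a,b,c`, and the Ptolemy relations
`x_{a,b}x_{c,d} + x_{a,c}x_{b,d} + x_{a,d}x_{b,c} = 0` for distinct `a,b,c,d`. -/
def relSet (n : ℕ) : Set (MvPolynomial (Sym2 (Fin n)) ℚ) :=
  {p | (∃ a : Fin n, p = X s(a, a)) ∨
       (∃ a b : Fin n, a ≠ b ∧ p = X s(a, b) * X s(a, b)) ∨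
       (∃ a b c : Fin n, a ≠ b ∧ a ≠ c ∧ b ≠ c ∧ p = X s(a, b) * X s(a, c)) ∨
       (∃ a b c d : Fin n, a ≠ b ∧ a ≠ c ∧ a ≠ d ∧ b ≠ c ∧ b ≠ d ∧ c ≠ d ∧
         p = X s(a, b) * X s(c, d) + X s(a, c) * X s(b, d) + X s(a, d) * X s(b, c))}

/-- The ring `M_n`, presented by generators `x_{a,b}` for two-element subsets `{a,b}` of `[n]`
subject to the relations in `relSet`. -/
abbrev Mring (n : ℕ) := MvPolynomial (Sym2 (Fin n)) ℚ ⧸ Ideal.span (relSet n)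

/-- The generator `x_{a,b}` of `M_n`. -/
noncomputable def xg {n : ℕ} (a b : Fin n) : Mring n :=
  Ideal.Quotient.mk _ (X s(a, b))

/-- `h(A) = Σ_{{a,b} ⊆ A} x_{a,b}`, the sum over two-element subsets of `A`. -/
noncomputable def hA {n : ℕ} (A : Finset (Fin n)) : Mring n :=
  ∑ a ∈ A, ∑ b ∈ A.filter (fun b => a < b), xg a b

def NoncrossingMatching (n : ℕ) (m : Finset (Finset (Fin n))) : Prop :=
  ¬ ∃ a b c d : Fin n, a < b ∧ b < c ∧ c < d ∧
      ({a, c} : Finset (Fin n)) ∈ m ∧ ({b, d} : Finset (Fin n)) ∈ m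

/-- The monomial `∏_{{a,b} ∈ m} x_{a,b}` in `M_n` associated to a matching `m`; for a
two-element set `p = {a,b}` we have `hA p = x_{a,b}`. -/
noncomputable def matchMonomial {n : ℕ} (m : Finset (Finset (Fin n))) : Mring n :=
  ∏ p ∈ m, hA p

section Aux

variable {n : ℕ}

lemma xg_symm (a b : Fin n) : xg a b = xg b a := by
  unfold xg; rw [Sym2.eq_swap]

lemma mem_rel_zero {p : MvPolynomial (Sym2 (Fin n)) ℚ} (hp : p ∈ relSet n) :
    Ideal.Quotient.mk (Ideal.span (relSet n)) p = 0 := by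
  rw [Ideal.Quotient.eq_zero_iff_mem]; exact Ideal.subset_span hp

lemma xg_diag (a : Fin n) : xg a a = 0 :=
  mem_rel_zero (Or.inl ⟨a, rfl⟩)

lemma xg_sq (a b : Fin n) (h : a ≠ b) : xg a b * xg a b = 0 := by
  have := mem_rel_zero (n := n) (Or.inr (Or.inl ⟨a, b, h, rfl⟩))
  rw [map_mul] at this; exact this

lemma xg_shared (a b c : Fin n) (hab : a ≠ b) (hac : a ≠ c) (hbc : b ≠ c) :
    xg a b * xg a c = 0 := by
  have := mem_rel_zero (n := n) (Or.inr (Or.inr (Or.inl ⟨a, b, c, hab, hac, hbc, rfl⟩)))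
  rw [map_mul] at this; exact this

lemma ptolemy (a b c d : Fin n) (hab : a ≠ b) (hac : a ≠ c) (had : a ≠ d)
    (hbc : b ≠ c) (hbd : b ≠ d) (hcd : c ≠ d) :
    xg a b * xg c d + xg a c * xg b d + xg a d * xg b c = 0 := by
  have := mem_rel_zero (n := n)
    (Or.inr (Or.inr (Or.inr ⟨a, b, c, d, hab, hac, had, hbc, hbd, hcd, rfl⟩)))
  rw [map_add, map_add, map_mul, map_mul, map_mul] at this; exact this

lemma hA_pair (a b : Fin n) (h : a < b) : hA {a, b} = xg a b := by
  unfold hA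
  rw [Finset.sum_pair (ne_of_lt h)]
  rw [Finset.filter_insert, Finset.filter_insert, Finset.filter_singleton,
      Finset.filter_singleton]
  simp [lt_irrefl, h, not_lt_of_gt h]

/-- Two 2-element subsets cross. -/
def Cross (p q : Finset (Fin n)) : Prop :=
  ∃ a b c d : Fin n, a < b ∧ b < c ∧ c < d ∧
    ((p = {a,c} ∧ q = {b,d}) ∨ (p = {b,d} ∧ q = {a,c}))

open Classical in
/-- Number of (ordered) crossing pairs in `m`. -/
noncomputable def cN (m : Finset (Finset (Fin n))) : ℕ :=
  ∑ p ∈ m, ∑ q ∈ m, if Cross p q then 1 else 0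

lemma pair_eq {a b c d : Fin n} (h : ({a,b} : Finset (Fin n)) = {c,d}) :
    (a=c∧b=d)∨(a=d∧b=c) := by
  have ha : a ∈ ({c,d}:Finset (Fin n)) := h ▸ (by simp)
  have hb : b ∈ ({c,d}:Finset (Fin n)) := h ▸ (by simp)
  have hc : c ∈ ({a,b}:Finset (Fin n)) := h ▸ (by simp)
  have hd : d ∈ ({a,b}:Finset (Fin n)) := h ▸ (by simp)
  simp only [Finset.mem_insert, Finset.mem_singleton] at ha hb hc hd
  rcases ha with rfl|rfl <;> rcases hb with rfl|rfl <;> tauto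

lemma cross_symm {p q : Finset (Fin n)} (h : Cross p q) : Cross q p := by
  obtain ⟨a,b,c,d,h1,h2,h3,h4⟩ := h
  exact ⟨a,b,c,d,h1,h2,h3, h4.symm.imp And.symm And.symm⟩

lemma cross_irrefl (p : Finset (Fin n)) : ¬ Cross p p := by
  rintro ⟨a,b,c,d,h1,h2,h3,(⟨h4,h5⟩|⟨h4,h5⟩)⟩ <;>
  · rw [h4] at h5
    rcases pair_eq h5 with ⟨rfl,rfl⟩|⟨rfl,rfl⟩ <;> simp at *

open Classical in
lemma crossIte_symm (p q : Finset (Fin n)) :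
    (if Cross p q then 1 else 0 : ℕ) = if Cross q p then 1 else 0 := by
  by_cases h : Cross p q
  · rw [if_pos h, if_pos (cross_symm h)]
  · rw [if_neg h, if_neg (fun hc => h (cross_symm hc))]

/-- key characterization of crossing for ordered pairs. -/
lemma cross_pair_iff {s t x y : Fin n} (hst : s < t) (hxy : x < y) :
    Cross {s,t} {x,y} ↔ ((s < x ∧ x < t ∧ t < y) ∨ (x < s ∧ s < y ∧ y < t)) := by
  constructor
  · rintro ⟨a,b,c,d,h1,h2,h3,(⟨h4,h5⟩|⟨h4,h5⟩)⟩ <;>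
    · rcases pair_eq h4 with ⟨rfl,rfl⟩|⟨rfl,rfl⟩ <;>
      rcases pair_eq h5 with ⟨rfl,rfl⟩|⟨rfl,rfl⟩ <;>
      simp only [Fin.lt_def] at * <;> omega
  · rintro (⟨h1,h2,h3⟩|⟨h1,h2,h3⟩)
    · exact ⟨s,x,t,y,h1,h2,h3, Or.inl ⟨rfl, rfl⟩⟩
    · exact ⟨x,s,y,t,h1,h2,h3, Or.inr ⟨rfl, rfl⟩⟩

open Classical in
lemma cross_ineq {s t a b c d : Fin n} (hst : s < t)
    (hab : a < b) (hbc : b < c) (hcd : c < d)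
    (hsa : s ≠ a) (hsb : s ≠ b) (hsc : s ≠ c) (hsd : s ≠ d)
    (hta : t ≠ a) (htb : t ≠ b) (htc : t ≠ c) (htd : t ≠ d) :
    ((if Cross {s,t} ({a,b} : Finset (Fin n)) then 1 else 0) +
      (if Cross {s,t} ({c,d} : Finset (Fin n)) then 1 else 0) ≤
     (if Cross {s,t} ({a,c} : Finset (Fin n)) then 1 else 0) +
      (if Cross {s,t} ({b,d} : Finset (Fin n)) then 1 else 0)) ∧
    ((if Cross {s,t} ({a,d} : Finset (Fin n)) then 1 else 0) +
      (if Cross {s,t} ({b,c} : Finset (Fin n)) then 1 else 0) ≤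
     (if Cross {s,t} ({a,c} : Finset (Fin n)) then 1 else 0) +
      (if Cross {s,t} ({b,d} : Finset (Fin n)) then 1 else 0)) := by
  rw [cross_pair_iff hst hab, cross_pair_iff hst hcd,
      cross_pair_iff hst (hab.trans hbc), cross_pair_iff hst (hbc.trans hcd),
      cross_pair_iff hst (hab.trans (hbc.trans hcd)), cross_pair_iff hst hbc]
  simp only [Fin.lt_def, ne_eq, ← Fin.val_ne_iff] at *
  constructor <;> split_ifs <;> omega

open Classical in
lemma cN_insert (x : Finset (Fin n)) (s : Finset (Finset (Fin n))) (hx : x ∉ s) :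
    cN (insert x s) = cN s + (if Cross x x then 1 else 0)
      + ∑ g ∈ s, ((if Cross x g then 1 else 0) + (if Cross g x then 1 else 0)) := by
  unfold cN
  rw [Finset.sum_insert hx]
  have h1 : ∀ p : Finset (Fin n), (∑ q ∈ insert x s, if Cross p q then 1 else 0)
      = (if Cross p x then 1 else 0) + ∑ q ∈ s, if Cross p q then 1 else 0 :=
    fun p => Finset.sum_insert hx
  rw [h1]
  rw [Finset.sum_congr rfl (fun p _ => h1 p)]
  simp only [Finset.sum_add_distrib]
  ring

open Classical in
lemma cN_insert2 (x y : Finset (Fin n)) (s : Finset (Finset (Fin n)))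
    (hx : x ∉ insert y s) (hy : y ∉ s) :
    cN (insert x (insert y s)) = cN s
      + ((if Cross x y then 1 else 0) + (if Cross y x then 1 else 0))
      + ∑ g ∈ s, (2 * (if Cross g x then 1 else 0) + 2 * (if Cross g y then 1 else 0)) := by
  rw [cN_insert _ _ hx, cN_insert _ _ hy, Finset.sum_insert hy]
  rw [if_neg (cross_irrefl x), if_neg (cross_irrefl y)]
  have h2 : ∀ g ∈ s, ((if Cross x g then 1 else 0) + (if Cross g x then 1 else 0) : ℕ)
      = 2 * (if Cross g x then 1 else 0) := by
    intro g _; rw [crossIte_symm x g]; ring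
  have h3 : ∀ g ∈ s, ((if Cross y g then 1 else 0) + (if Cross g y then 1 else 0) : ℕ)
      = 2 * (if Cross g y then 1 else 0) := by
    intro g _; rw [crossIte_symm y g]; ring
  rw [Finset.sum_congr rfl h2, Finset.sum_congr rfl h3]
  simp only [Finset.sum_add_distrib]
  ring

/-- The span of noncrossing matching monomials. -/
noncomputable def NCspan (n : ℕ) : Submodule ℚ (Mring n) :=
  Submodule.span ℚ
    {y : Mring n | ∃ m', IsMatching n m' ∧ NoncrossingMatching n m' ∧ y = matchMonomial m'}

lemma ordered_pair_of_card_two {g : Finset (Fin n)} (hg : g.card = 2) :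
    ∃ s t : Fin n, s < t ∧ g = {s, t} := by
  obtain ⟨x, y, hxy, rfl⟩ := Finset.card_eq_two.mp hg
  rcases lt_or_gt_of_ne hxy with h | h
  · exact ⟨x, y, h, rfl⟩
  · exact ⟨y, x, h, by rw [Finset.pair_comm]⟩

end Aux

section Key

variable {n : ℕ}

open Classical Finset in
lemma key_span (m : Finset (Finset (Fin n))) (hm : IsMatching n m) :
    matchMonomial m ∈ NCspan n := by
  generalize hN : cN m = N
  induction N using Nat.strong_induction_on generalizing m with
  | _ N ih =>
  by_cases hnc : NoncrossingMatching n m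
  · exact Submodule.subset_span ⟨m, hm, hnc, rfl⟩
  · unfold NoncrossingMatching at hnc
    push_neg at hnc
    obtain ⟨a, b, c, d, hab, hbc, hcd, hacm, hbdm⟩ := hnc
    -- basic distinctness
    have hac : a < c := hab.trans hbc
    have hbd : b < d := hbc.trans hcd
    have had : a < d := hac.trans hcd
    have hne : ({b,d} : Finset (Fin n)) ≠ {a,c} := by
      intro h
      rcases pair_eq h with ⟨rfl, rfl⟩ | ⟨rfl, rfl⟩
      · exact absurd hab (lt_irrefl _)
      · exact absurd (hab.trans hbd) (lt_irrefl _)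
    set m'' := (m.erase {a,c}).erase {b,d} with hm''def
    have hbd' : ({b,d} : Finset (Fin n)) ∈ m.erase {a,c} := Finset.mem_erase.mpr ⟨hne, hbdm⟩
    have hmeq : m = insert {a,c} (insert {b,d} m'') := by
      rw [hm''def, Finset.insert_erase hbd', Finset.insert_erase hacm]
    have hacnot : ({a,c} : Finset (Fin n)) ∉ insert {b,d} m'' := by
      rw [hm''def, Finset.insert_erase hbd']; exact Finset.notMem_erase _ _
    have hbdnot : ({b,d} : Finset (Fin n)) ∉ m'' := Finset.notMem_erase _ _
    -- vertices of m'' avoid a,b,c,d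
    have hvert : ∀ g ∈ m'', a ∉ g ∧ b ∉ g ∧ c ∉ g ∧ d ∉ g := by
      intro g hg
      have hg1 : g ∈ m.erase {a,c} := Finset.mem_of_mem_erase hg
      have hgm : g ∈ m := Finset.mem_of_mem_erase hg1
      have hgne1 : g ≠ ({a,c} : Finset (Fin n)) := Finset.ne_of_mem_erase hg1
      have hgne2 : g ≠ ({b,d} : Finset (Fin n)) := Finset.ne_of_mem_erase hg
      have d1 : Disjoint g ({a,c} : Finset (Fin n)) := hm.2 hgm hacm hgne1
      have d2 : Disjoint g ({b,d} : Finset (Fin n)) := hm.2 hgm hbdm hgne2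
      rw [Finset.disjoint_right] at d1 d2
      exact ⟨d1 (by simp), d2 (by simp), d1 (by simp), d2 (by simp)⟩
    -- memberships for the two new matchings
    have hcdnot : ({c,d} : Finset (Fin n)) ∉ m'' := fun h => (hvert _ h).2.2.1 (by simp)
    have habnot : ({a,b} : Finset (Fin n)) ∉ insert {c,d} m'' := by
      intro h
      rcases Finset.mem_insert.mp h with h | h
      · rcases pair_eq h with ⟨rfl, rfl⟩ | ⟨rfl, rfl⟩ <;>
          simp only [Fin.lt_def] at hab hbc hcd <;> omega
      · exact (hvert _ h).1 (by simp)
    have hbcnot : ({b,c} : Finset (Fin n)) ∉ m'' := fun h => (hvert _ h).2.1 (by simp)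
    have hadnot : ({a,d} : Finset (Fin n)) ∉ insert {b,c} m'' := by
      intro h
      rcases Finset.mem_insert.mp h with h | h
      · rcases pair_eq h with ⟨rfl, rfl⟩ | ⟨rfl, rfl⟩ <;>
          simp only [Fin.lt_def] at hab hbc hcd <;> omega
      · exact (hvert _ h).1 (by simp)
    set m1 := insert ({a,b} : Finset (Fin n)) (insert ({c,d} : Finset (Fin n)) m'') with hm1def
    set m2 := insert ({a,d} : Finset (Fin n)) (insert ({b,c} : Finset (Fin n)) m'') with hm2def
    have hm''sub : m'' ⊆ m := fun g hg =>
      Finset.mem_of_mem_erase (Finset.mem_of_mem_erase hg)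
    have hm''match : IsMatching n m'' :=
      ⟨fun p hp => hm.1 p (hm''sub hp),
       fun p hp q hq hpq => hm.2 (hm''sub hp) (hm''sub hq) hpq⟩
    -- m1 and m2 are matchings
    have mk_matching : ∀ (u v w z : Fin n), u < v → w < z →
        u ≠ w → u ≠ z → v ≠ w → v ≠ z →
        (∀ g ∈ m'', u ∉ g ∧ v ∉ g ∧ w ∉ g ∧ z ∉ g) →
        IsMatching n (insert {u,v} (insert {w,z} m'')) := by
      intro u v w z huv hwz huw huz hvw hvz hvt
      constructor
      · intro p hp
        rcases Finset.mem_insert.mp hp with rfl | hp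
        · exact Finset.card_pair (ne_of_lt huv)
        rcases Finset.mem_insert.mp hp with rfl | hp
        · exact Finset.card_pair (ne_of_lt hwz)
        · exact hm''match.1 p hp
      · intro p hp q hq hpq
        simp only [Finset.coe_insert, Set.mem_insert_iff, Finset.mem_coe] at hp hq
        have duvwz : Disjoint ({u,v} : Finset (Fin n)) ({w,z} : Finset (Fin n)) := by
          rw [Finset.disjoint_left]
          intro x hx hx2
          simp only [Finset.mem_insert, Finset.mem_singleton] at hx hx2
          rcases hx with rfl | rfl <;> rcases hx2 with h | h
          exacts [huw h, huz h, hvw h, hvz h]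
        have duv : ∀ g ∈ m'', Disjoint ({u,v} : Finset (Fin n)) g := by
          intro g hg
          rw [Finset.disjoint_left]
          intro x hx
          simp only [Finset.mem_insert, Finset.mem_singleton] at hx
          rcases hx with rfl | rfl
          · exact (hvt g hg).1
          · exact (hvt g hg).2.1
        have dwz : ∀ g ∈ m'', Disjoint ({w,z} : Finset (Fin n)) g := by
          intro g hg
          rw [Finset.disjoint_left]
          intro x hx
          simp only [Finset.mem_insert, Finset.mem_singleton] at hx
          rcases hx with rfl | rfl
          · exact (hvt g hg).2.2.1
          · exact (hvt g hg).2.2.2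
        rcases hp with rfl | rfl | hp <;> rcases hq with rfl | rfl | hq
        · exact absurd rfl hpq
        · exact duvwz
        · exact duv _ hq
        · exact duvwz.symm
        · exact absurd rfl hpq
        · exact dwz _ hq
        · exact (duv _ hp).symm
        · exact (dwz _ hp).symm
        · exact hm''match.2 hp hq hpq
    have hm1match : IsMatching n m1 :=
      mk_matching a b c d hab hcd (ne_of_lt hac) (ne_of_lt had)
        (ne_of_lt hbc) (ne_of_lt hbd) (fun g hg => hvert g hg)
    have hm2match : IsMatching n m2 :=
      mk_matching a d b c had hbc (ne_of_lt hab) (ne_of_lt hac)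
        (fun h => (ne_of_lt hbd) h.symm) (fun h => (ne_of_lt hcd) h.symm)
        (fun g hg => ⟨(hvert g hg).1, (hvert g hg).2.2.2, (hvert g hg).2.1, (hvert g hg).2.2.1⟩)
    -- crossing counts
    have hX : Cross ({a,c} : Finset (Fin n)) ({b,d} : Finset (Fin n)) :=
      ⟨a, b, c, d, hab, hbc, hcd, Or.inl ⟨rfl, rfl⟩⟩
    have hN1 : ¬ Cross ({a,b} : Finset (Fin n)) ({c,d} : Finset (Fin n)) := by
      rw [cross_pair_iff hab hcd]
      simp only [Fin.lt_def] at *; omega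
    have hN2 : ¬ Cross ({a,d} : Finset (Fin n)) ({b,c} : Finset (Fin n)) := by
      rw [cross_pair_iff had hbc]
      simp only [Fin.lt_def] at *; omega
    have hcNm : cN m = cN m'' + 2
        + ∑ g ∈ m'', (2 * (if Cross g ({a,c} : Finset (Fin n)) then 1 else 0)
            + 2 * (if Cross g ({b,d} : Finset (Fin n)) then 1 else 0)) := by
      rw [hmeq, cN_insert2 _ _ _ hacnot hbdnot, if_pos hX, if_pos (cross_symm hX)]
    have hcNm1 : cN m1 = cN m'' + 0
        + ∑ g ∈ m'', (2 * (if Cross g ({a,b} : Finset (Fin n)) then 1 else 0)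
            + 2 * (if Cross g ({c,d} : Finset (Fin n)) then 1 else 0)) := by
      rw [hm1def, cN_insert2 _ _ _ habnot hcdnot, if_neg hN1,
        if_neg (fun h => hN1 (cross_symm h))]
    have hcNm2 : cN m2 = cN m'' + 0
        + ∑ g ∈ m'', (2 * (if Cross g ({a,d} : Finset (Fin n)) then 1 else 0)
            + 2 * (if Cross g ({b,c} : Finset (Fin n)) then 1 else 0)) := by
      rw [hm2def, cN_insert2 _ _ _ hadnot hbcnot, if_neg hN2,
        if_neg (fun h => hN2 (cross_symm h))]
    -- pointwise bound
    have hpoint : ∀ g ∈ m'',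
        ((2 * (if Cross g ({a,b} : Finset (Fin n)) then 1 else 0)
            + 2 * (if Cross g ({c,d} : Finset (Fin n)) then 1 else 0) : ℕ) ≤
          2 * (if Cross g ({a,c} : Finset (Fin n)) then 1 else 0)
            + 2 * (if Cross g ({b,d} : Finset (Fin n)) then 1 else 0)) ∧
        ((2 * (if Cross g ({a,d} : Finset (Fin n)) then 1 else 0)
            + 2 * (if Cross g ({b,c} : Finset (Fin n)) then 1 else 0) : ℕ) ≤
          2 * (if Cross g ({a,c} : Finset (Fin n)) then 1 else 0)
            + 2 * (if Cross g ({b,d} : Finset (Fin n)) then 1 else 0)) := by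
      intro g hg
      obtain ⟨s, t, hst, rfl⟩ := ordered_pair_of_card_two (hm''match.1 g hg)
      have hv := hvert _ hg
      simp only [Finset.mem_insert, Finset.mem_singleton, not_or] at hv
      obtain ⟨⟨hsa, hta⟩, ⟨hsb, htb⟩, ⟨hsc, htc⟩, ⟨hsd, htd⟩⟩ := hv
      have := cross_ineq hst hab hbc hcd (fun h => hsa h.symm) (fun h => hsb h.symm)
        (fun h => hsc h.symm) (fun h => hsd h.symm) (fun h => hta h.symm)
        (fun h => htb h.symm) (fun h => htc h.symm) (fun h => htd h.symm)
      omega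
    have hsum1 : (∑ g ∈ m'', (2 * (if Cross g ({a,b} : Finset (Fin n)) then 1 else 0)
            + 2 * (if Cross g ({c,d} : Finset (Fin n)) then 1 else 0))) ≤
        ∑ g ∈ m'', (2 * (if Cross g ({a,c} : Finset (Fin n)) then 1 else 0)
            + 2 * (if Cross g ({b,d} : Finset (Fin n)) then 1 else 0)) :=
      Finset.sum_le_sum (fun g hg => (hpoint g hg).1)
    have hsum2 : (∑ g ∈ m'', (2 * (if Cross g ({a,d} : Finset (Fin n)) then 1 else 0)
            + 2 * (if Cross g ({b,c} : Finset (Fin n)) then 1 else 0))) ≤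
        ∑ g ∈ m'', (2 * (if Cross g ({a,c} : Finset (Fin n)) then 1 else 0)
            + 2 * (if Cross g ({b,d} : Finset (Fin n)) then 1 else 0)) :=
      Finset.sum_le_sum (fun g hg => (hpoint g hg).2)
    have hlt1 : cN m1 < N := by omega
    have hlt2 : cN m2 < N := by omega
    -- the algebraic identity
    have hprod : matchMonomial m = xg a c * (xg b d * matchMonomial m'') := by
      unfold matchMonomial
      rw [hmeq, Finset.prod_insert hacnot, Finset.prod_insert hbdnot,
        hA_pair a c hac, hA_pair b d hbd]
    have hprod1 : matchMonomial m1 = xg a b * (xg c d * matchMonomial m'') := by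
      unfold matchMonomial
      rw [hm1def, Finset.prod_insert habnot, Finset.prod_insert hcdnot,
        hA_pair a b hab, hA_pair c d hcd]
    have hprod2 : matchMonomial m2 = xg a d * (xg b c * matchMonomial m'') := by
      unfold matchMonomial
      rw [hm2def, Finset.prod_insert hadnot, Finset.prod_insert hbcnot,
        hA_pair a d had, hA_pair b c hbc]
    have hpt := ptolemy a b c d (ne_of_lt hab) (ne_of_lt hac) (ne_of_lt had)
      (ne_of_lt hbc) (ne_of_lt hbd) (ne_of_lt hcd)
    have heq : matchMonomial m = - matchMonomial m1 - matchMonomial m2 := by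
      rw [hprod, hprod1, hprod2]
      linear_combination (matchMonomial m'') * hpt
    rw [heq]
    exact Submodule.sub_mem _ (Submodule.neg_mem _ (ih _ hlt1 m1 hm1match rfl))
      (ih _ hlt2 m2 hm2match rfl)

end Key

section Span

variable {n : ℕ}

lemma empty_matching : IsMatching n (∅ : Finset (Finset (Fin n))) :=
  ⟨fun p hp => absurd hp (Finset.notMem_empty p), by simp⟩

lemma empty_noncrossing : NoncrossingMatching n (∅ : Finset (Finset (Fin n))) := by
  rintro ⟨a, b, c, d, _, _, _, h, _⟩
  exact absurd h (Finset.notMem_empty _)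

lemma one_mem_NCspan : (1 : Mring n) ∈ NCspan n := by
  have : (1 : Mring n) = matchMonomial (∅ : Finset (Finset (Fin n))) := by
    simp [matchMonomial]
  rw [this]
  exact Submodule.subset_span ⟨∅, empty_matching, empty_noncrossing, rfl⟩

lemma matchMul (m : Finset (Finset (Fin n))) (hm : IsMatching n m) (a b : Fin n) :
    matchMonomial m * xg a b ∈ NCspan n := by
  suffices H : ∀ a b : Fin n, a < b → matchMonomial m * xg a b ∈ NCspan n by
    rcases lt_trichotomy a b with h | rfl | h
    · exact H a b h
    · rw [xg_diag, mul_zero]; exact Submodule.zero_mem _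
    · rw [xg_symm]; exact H b a h
  clear a b
  intro a b hab
  by_cases hin : ∃ p ∈ m, a ∈ p ∨ b ∈ p
  · obtain ⟨p, hp, hv⟩ := hin
    obtain ⟨u, v, huv, rfl⟩ := ordered_pair_of_card_two (hm.1 p hp)
    have hsplit : matchMonomial m = xg u v * matchMonomial (m.erase {u, v}) := by
      unfold matchMonomial
      rw [← Finset.mul_prod_erase _ _ hp, hA_pair u v huv]
    have hzero : xg u v * xg a b = 0 := by
      simp only [Finset.mem_insert, Finset.mem_singleton] at hv
      rcases hv with (rfl | rfl) | (rfl | rfl)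
      · -- a = u
        rcases eq_or_ne v b with rfl | hvb
        · exact xg_sq a v (ne_of_lt hab)
        · exact xg_shared a v b (ne_of_lt huv) (ne_of_lt hab) hvb
      · -- a = v
        rw [xg_symm u a]
        exact xg_shared a u b (ne_of_gt huv) (ne_of_lt hab) (ne_of_lt (huv.trans hab))
      · -- b = u
        rw [xg_symm a b]
        exact xg_shared b v a (ne_of_lt huv) (ne_of_gt hab) (ne_of_gt (hab.trans huv))
      · -- b = v
        rcases eq_or_ne u a with h | hua
        · rw [h]; exact xg_sq _ _ (ne_of_lt hab)
        · rw [xg_symm u _, xg_symm a _]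
          exact xg_shared _ u a (ne_of_gt huv) (ne_of_gt hab) hua
    have : matchMonomial m * xg a b = 0 := by
      rw [hsplit]
      calc xg u v * matchMonomial (m.erase {u, v}) * xg a b
          = (xg u v * xg a b) * matchMonomial (m.erase {u, v}) := by ring
        _ = 0 := by rw [hzero, zero_mul]
    rw [this]
    exact Submodule.zero_mem _
  · push_neg at hin
    have habm : ({a, b} : Finset (Fin n)) ∉ m := fun h => (hin _ h).1 (by simp)
    have hmatch : IsMatching n (insert {a, b} m) := by
      constructor
      · intro p hp
        rcases Finset.mem_insert.mp hp with rfl | hp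
        · exact Finset.card_pair (ne_of_lt hab)
        · exact hm.1 p hp
      · intro p hp q hq hpq
        simp only [Finset.coe_insert, Set.mem_insert_iff, Finset.mem_coe] at hp hq
        have dab : ∀ g ∈ m, Disjoint ({a, b} : Finset (Fin n)) g := by
          intro g hg
          rw [Finset.disjoint_left]
          intro x hx
          simp only [Finset.mem_insert, Finset.mem_singleton] at hx
          rcases hx with rfl | rfl
          · exact (hin g hg).1
          · exact (hin g hg).2
        rcases hp with rfl | hp <;> rcases hq with rfl | hq
        · exact absurd rfl hpq
        · exact dab _ hq
        · exact (dab _ hp).symm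
        · exact hm.2 hp hq hpq
    have : matchMonomial m * xg a b = matchMonomial (insert {a, b} m) := by
      unfold matchMonomial
      rw [Finset.prod_insert habm, hA_pair a b hab, mul_comm]
    rw [this]
    exact key_span _ hmatch

lemma mul_xg_mem {y : Mring n} (hy : y ∈ NCspan n) (a b : Fin n) :
    y * xg a b ∈ NCspan n := by
  induction hy using Submodule.span_induction with
  | mem x hx =>
    obtain ⟨m', hm', _, rfl⟩ := hx
    exact matchMul m' hm' a b
  | zero => rw [zero_mul]; exact Submodule.zero_mem _
  | add x y _ _ hx hy => rw [add_mul]; exact Submodule.add_mem _ hx hy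
  | smul r x _ hx => rw [smul_mul_assoc]; exact Submodule.smul_mem _ r hx

lemma mk_mem_NCspan (p : MvPolynomial (Sym2 (Fin n)) ℚ) :
    Ideal.Quotient.mk (Ideal.span (relSet n)) p ∈ NCspan n := by
  induction p using MvPolynomial.induction_on with
  | C a =>
    have : (Ideal.Quotient.mk (Ideal.span (relSet n))) (C a) = a • (1 : Mring n) := by
      rw [← Algebra.algebraMap_eq_smul_one]
      rfl
    rw [this]
    exact Submodule.smul_mem _ a one_mem_NCspan
  | add p q hp hq => rw [map_add]; exact Submodule.add_mem _ hp hq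
  | mul_X p e hp =>
    induction e using Sym2.ind with
    | _ a b =>
      rw [map_mul]
      exact mul_xg_mem hp a b

end Span

/-- Every matching monomial lies in the span of the noncrossing matching monomials; in fact
the noncrossing matching monomials span `M_n` as a vector space. -/
theorem matchMonomial_mem_span_noncrossing (n : ℕ) :
    (∀ m : Finset (Finset (Fin n)), IsMatching n m →
      matchMonomial m ∈ Submodule.span ℚ
        {y : Mring n | ∃ m', IsMatching n m' ∧ NoncrossingMatching n m' ∧
          y = matchMonomial m'}) ∧
    Submodule.span ℚ
        {y : Mring n | ∃ m', IsMatching n m' ∧ NoncrossingMatching n m' ∧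
          y = matchMonomial m'} = ⊤ := by
  constructor
  · exact fun m hm => key_span m hm
  · rw [eq_top_iff]
    rintro x -
    obtain ⟨p, rfl⟩ := Ideal.Quotient.mk_surjective x
    exact mk_mem_NCspan p
end

section
/- The number of noncrossing matchings of [n] with exactly k pairs equals binomial(n, 2k) · C_k, where C_k is the k-th Catalan number. -/
set_option linter.unusedSectionVars false

namespace NCM0

open Finset List

variable {n k : ℕ}

def cnt (w : Fin n → Option Bool) (b : Bool) (t : ℕ) : ℕ :=
  (Finset.univ.filter (fun i : Fin n => (i : ℕ) < t ∧ w i = some b)).card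

def Ht (w : Fin n → Option Bool) (t : ℕ) : ℤ :=
  (cnt w true t : ℤ) - (cnt w false t : ℤ)

def Good (n k : ℕ) (w : Fin n → Option Bool) : Prop :=
  (∀ t, cnt w false t ≤ cnt w true t) ∧ cnt w true n = k ∧ cnt w false n = k

def FR (w : Fin n → Option Bool) (u d : ℕ) : Prop :=
  u < d ∧ Ht w (d + 1) = Ht w u ∧ ∀ t, u < t → t ≤ d → Ht w u < Ht w t

lemma cnt_zero (w : Fin n → Option Bool) (b : Bool) : cnt w b 0 = 0 := by
  simp [cnt]

lemma cnt_mono (w : Fin n → Option Bool) (b : Bool) {t t' : ℕ} (h : t ≤ t') :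
    cnt w b t ≤ cnt w b t' := by
  apply Finset.card_le_card
  intro i hi
  simp only [Finset.mem_filter] at *
  exact ⟨hi.1, lt_of_lt_of_le hi.2.1 h, hi.2.2⟩

lemma cnt_succ (w : Fin n → Option Bool) (b : Bool) {t : ℕ} (ht : t < n) :
    cnt w b (t + 1) = cnt w b t + (if w ⟨t, ht⟩ = some b then 1 else 0) := by
  unfold cnt
  have hsplit : (Finset.univ.filter (fun i : Fin n => (i : ℕ) < t + 1 ∧ w i = some b)) =
      (Finset.univ.filter (fun i : Fin n => (i : ℕ) < t ∧ w i = some b)) ∪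
      (Finset.univ.filter (fun i : Fin n => i = ⟨t, ht⟩ ∧ w i = some b)) := by
    ext i
    simp only [Finset.mem_filter, Finset.mem_union, Finset.mem_univ, true_and]
    constructor
    · rintro ⟨h1, h2⟩
      rcases Nat.lt_succ_iff_lt_or_eq.mp h1 with h | h
      · exact Or.inl ⟨h, h2⟩
      · exact Or.inr ⟨Fin.ext h, h2⟩
    · rintro (⟨h1, h2⟩ | ⟨h1, h2⟩)
      · exact ⟨Nat.lt_succ_of_lt h1, h2⟩
      · exact ⟨by rw [h1]; exact Nat.lt_succ_self t, h2⟩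
  rw [hsplit, Finset.card_union_of_disjoint]
  · congr 1
    by_cases hb : w ⟨t, ht⟩ = some b
    · rw [if_pos hb]
      rw [show (Finset.univ.filter (fun i : Fin n => i = ⟨t, ht⟩ ∧ w i = some b)) = {⟨t, ht⟩} by
        ext i; simp only [Finset.mem_filter, Finset.mem_univ, true_and, Finset.mem_singleton]
        constructor
        · rintro ⟨h1, _⟩; exact h1
        · rintro rfl; exact ⟨rfl, hb⟩]
      simp
    · rw [if_neg hb]
      rw [show (Finset.univ.filter (fun i : Fin n => i = ⟨t, ht⟩ ∧ w i = some b)) = ∅ by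
        ext i; simp only [Finset.mem_filter, Finset.mem_univ, true_and, Finset.notMem_empty,
          iff_false, not_and]
        rintro rfl h; exact hb h]
      simp
  · rw [Finset.disjoint_left]
    intro i hi hi'
    simp only [Finset.mem_filter] at hi hi'
    have := hi.2.1
    rw [hi'.2.1] at this
    exact lt_irrefl _ this

lemma cnt_of_ge (w : Fin n → Option Bool) (b : Bool) {t : ℕ} (ht : n ≤ t) :
    cnt w b t = cnt w b n := by
  unfold cnt
  congr 1
  ext i
  simp only [Finset.mem_filter, and_congr_right_iff]
  intro _
  have := i.isLt
  constructor <;> intro h <;> [skip; exact ⟨lt_of_lt_of_le this ht, h.2⟩]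
  exact ⟨this, h.2⟩

lemma cnt_split (w : Fin n → Option Bool) (b : Bool) {u t : ℕ} (h : u ≤ t) :
    cnt w b t = cnt w b u +
      (Finset.univ.filter (fun i : Fin n => u ≤ (i : ℕ) ∧ (i : ℕ) < t ∧ w i = some b)).card := by
  unfold cnt
  rw [← Finset.card_union_of_disjoint]
  · congr 1
    ext i
    simp only [Finset.mem_filter, Finset.mem_union, Finset.mem_univ, true_and]
    constructor
    · rintro ⟨h1, h2⟩
      rcases lt_or_ge (i : ℕ) u with h3 | h3
      · exact Or.inl ⟨h3, h2⟩
      · exact Or.inr ⟨h3, h1, h2⟩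
    · rintro (⟨h1, h2⟩ | ⟨h1, h2, h3⟩)
      · exact ⟨lt_of_lt_of_le h1 h, h2⟩
      · exact ⟨h2, h3⟩
  · rw [Finset.disjoint_left]
    intro i hi hi'
    simp only [Finset.mem_filter] at hi hi'
    exact absurd hi'.2.1 (not_le.mpr hi.2.1)

lemma Ht_succ_of_true (w : Fin n → Option Bool) {t : ℕ} (ht : t < n)
    (h : w ⟨t, ht⟩ = some true) : Ht w (t + 1) = Ht w t + 1 := by
  unfold Ht
  rw [cnt_succ w true ht, cnt_succ w false ht, if_pos h, if_neg (by simp [h])]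
  push_cast; ring

lemma Ht_succ_of_false (w : Fin n → Option Bool) {t : ℕ} (ht : t < n)
    (h : w ⟨t, ht⟩ = some false) : Ht w (t + 1) = Ht w t - 1 := by
  unfold Ht
  rw [cnt_succ w true ht, cnt_succ w false ht, if_pos h, if_neg (by simp [h])]
  push_cast; ring

lemma Ht_succ_of_none (w : Fin n → Option Bool) {t : ℕ} (ht : t < n)
    (h : w ⟨t, ht⟩ = none) : Ht w (t + 1) = Ht w t := by
  unfold Ht
  rw [cnt_succ w true ht, cnt_succ w false ht, if_neg (by simp [h]), if_neg (by simp [h])]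
  push_cast; ring

lemma Ht_of_ge (w : Fin n → Option Bool) {t : ℕ} (ht : n ≤ t) : Ht w t = Ht w n := by
  unfold Ht; rw [cnt_of_ge w true ht, cnt_of_ge w false ht]

lemma Ht_step_up (w : Fin n → Option Bool) (t : ℕ) : Ht w (t + 1) ≤ Ht w t + 1 := by
  rcases lt_or_ge t n with ht | ht
  · rcases h : w ⟨t, ht⟩ with _ | b
    · rw [Ht_succ_of_none w ht h]; omega
    · cases b
      · rw [Ht_succ_of_false w ht h]; omega
      · rw [Ht_succ_of_true w ht h]
  · rw [Ht_of_ge w (le_trans ht (Nat.le_succ t)), Ht_of_ge w ht]; omega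

lemma Ht_step_down (w : Fin n → Option Bool) (t : ℕ) : Ht w t - 1 ≤ Ht w (t + 1) := by
  rcases lt_or_ge t n with ht | ht
  · rcases h : w ⟨t, ht⟩ with _ | b
    · rw [Ht_succ_of_none w ht h]; omega
    · cases b
      · rw [Ht_succ_of_false w ht h]
      · rw [Ht_succ_of_true w ht h]; omega
  · rw [Ht_of_ge w (le_trans ht (Nat.le_succ t)), Ht_of_ge w ht]; omega

lemma w_true_of_incr (w : Fin n → Option Bool) {t : ℕ} (ht : t < n)
    (h : Ht w t < Ht w (t + 1)) : w ⟨t, ht⟩ = some true := by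
  rcases hv : w ⟨t, ht⟩ with _ | b
  · rw [Ht_succ_of_none w ht hv] at h; omega
  · cases b
    · rw [Ht_succ_of_false w ht hv] at h; omega
    · rfl

lemma ivt_down (g : ℕ → ℤ) (hg : ∀ t, g t - 1 ≤ g (t + 1)) {a b : ℕ} {c : ℤ}
    (hab : a ≤ b) (ha : c < g a) (hb : g b ≤ c) : ∃ t, a < t ∧ t ≤ b ∧ g t = c := by
  have hne : a ≠ b := by rintro rfl; omega
  have hex : ∃ t, a < t ∧ t ≤ b ∧ g t ≤ c := ⟨b, lt_of_le_of_ne hab hne, le_refl _, hb⟩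
  classical
  obtain ⟨h1, h2, h3⟩ := Nat.find_spec hex
  set t₀ := Nat.find hex with ht₀
  refine ⟨t₀, h1, h2, ?_⟩
  have hgt : c < g (t₀ - 1) := by
    rcases Nat.lt_or_ge (a + 1) t₀ with hcase | hcase
    · by_contra hcon
      have : t₀ - 1 < t₀ := by omega
      exact Nat.find_min hex this ⟨by omega, by omega, by omega⟩
    · have : t₀ = a + 1 := by omega
      rw [this]; simpa using ha
  have := hg (t₀ - 1)
  have htt : t₀ - 1 + 1 = t₀ := by omega
  rw [htt] at this
  omega

lemma ivt_up (g : ℕ → ℤ) (hg : ∀ t, g (t + 1) ≤ g t + 1) {a b : ℕ} {c : ℤ}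
    (hab : a ≤ b) (ha : g a ≤ c) (hb : c < g b) : ∃ t, a ≤ t ∧ t < b ∧ g t = c := by
  classical
  set t₀ := Nat.findGreatest (fun t => g t ≤ c) b with ht₀
  have hspec : g t₀ ≤ c := Nat.findGreatest_spec (P := fun t => g t ≤ c) hab ha
  have hle : t₀ ≤ b := Nat.findGreatest_le b
  have hat : a ≤ t₀ := Nat.le_findGreatest hab ha
  have hlt : t₀ < b := by
    rcases lt_or_eq_of_le hle with h | h
    · exact h
    · rw [h] at hspec; omega
  have hnext : ¬ (g (t₀ + 1) ≤ c) := Nat.findGreatest_is_greatest (P := fun t => g t ≤ c) (Nat.lt_succ_self t₀) (by omega)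
  have := hg t₀
  refine ⟨t₀, hat, hlt, by omega⟩

lemma FR.ne_lt {w : Fin n → Option Bool} {u d d' : ℕ} (h : FR w u d)
    (h' : FR w u d') (hlt : d < d') : False := by
  have := h'.2.2 (d + 1) (Nat.lt_succ_of_lt h.1) hlt
  rw [h.2.1] at this
  exact lt_irrefl _ this

lemma FR.unique_right {w : Fin n → Option Bool} {u d d' : ℕ} (h : FR w u d)
    (h' : FR w u d') : d = d' := by
  rcases lt_trichotomy d d' with hc | hc | hc
  · exact absurd (FR.ne_lt h h' hc) not_false
  · exact hc
  · exact absurd (FR.ne_lt h' h hc) not_false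

lemma FR.unique_left {w : Fin n → Option Bool} {u u' d : ℕ} (h : FR w u d)
    (h' : FR w u' d) : u = u' := by
  rcases lt_trichotomy u u' with hc | hc | hc
  · have h1 := h.2.2 u' hc (le_of_lt h'.1)
    have := h'.2.1
    rw [h.2.1] at this
    omega
  · exact hc
  · have h1 := h'.2.2 u hc (le_of_lt h.1)
    have := h.2.1
    rw [h'.2.1] at this
    omega

lemma FR.noncross {w : Fin n → Option Bool} {a b c d : ℕ} (hab : a < b) (hbc : b < c)
    (hcd : c < d) (h1 : FR w a c) (h2 : FR w b d) : False := by
  have hb := h1.2.2 b hab (le_of_lt hbc)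
  have hc1 := h2.2.2 (c + 1) (by omega) (by omega)
  rw [h1.2.1] at hc1
  omega


lemma w_false_of_decr (w : Fin n → Option Bool) {t : ℕ} (ht : t < n)
    (h : Ht w (t + 1) < Ht w t) : w ⟨t, ht⟩ = some false := by
  rcases hv : w ⟨t, ht⟩ with _ | b
  · rw [Ht_succ_of_none w ht hv] at h; omega
  · cases b
    · rfl
    · rw [Ht_succ_of_true w ht hv] at h; omega

section GoodW

variable {w : Fin n → Option Bool}

lemma Ht_nonneg (hw : Good n k w) (t : ℕ) : 0 ≤ Ht w t := by
  have := hw.1 t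
  unfold Ht
  omega

lemma Ht_top (hw : Good n k w) : Ht w n = 0 := by
  unfold Ht
  rw [hw.2.1, hw.2.2]
  ring

lemma exists_ret (hw : Good n k w) {u : Fin n} (hu : w u = some true) :
    ∃ d, (u : ℕ) < d ∧ d < n ∧ Ht w (d + 1) = Ht w (u : ℕ) := by
  have hu1 : Ht w ((u : ℕ) + 1) = Ht w (u : ℕ) + 1 :=
    Ht_succ_of_true w u.isLt (by simpa using hu)
  have hun : (u : ℕ) + 1 ≤ n := u.isLt
  obtain ⟨t, h1, h2, h3⟩ := ivt_down (Ht w) (Ht_step_down w) (c := Ht w (u : ℕ)) hun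
    (by rw [hu1]; omega) (by rw [Ht_top hw]; exact Ht_nonneg hw _)
  have ht1 : 1 ≤ t := by omega
  refine ⟨t - 1, by omega, by omega, ?_⟩
  rw [show t - 1 + 1 = t by omega]
  exact h3

open scoped Classical in
noncomputable def pa (w : Fin n → Option Bool) (u : Fin n) : Fin n :=
  if h : ∃ d, (u : ℕ) < d ∧ d < n ∧ Ht w (d + 1) = Ht w (u : ℕ) then
    ⟨Nat.find h, (Nat.find_spec h).2.1⟩ else u

lemma pa_spec (hw : Good n k w) {u : Fin n} (hu : w u = some true) :
    u < pa w u ∧ FR w (u : ℕ) (pa w u : ℕ) ∧ w (pa w u) = some false := by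
  have hex := exists_ret hw hu
  have hpa : pa w u = ⟨Nat.find hex, (Nat.find_spec hex).2.1⟩ := by
    unfold pa
    rw [dif_pos hex]
  obtain ⟨hs1, hs2, hs3⟩ := Nat.find_spec hex
  set d := Nat.find hex with hd
  have hu1 : Ht w ((u : ℕ) + 1) = Ht w (u : ℕ) + 1 :=
    Ht_succ_of_true w u.isLt (by simpa using hu)
  have hne : ∀ t, (u : ℕ) + 1 < t → t ≤ d → Ht w t ≠ Ht w (u : ℕ) := by
    intro t h1 h2 hcon
    have hmin := Nat.find_min hex (m := t - 1) (by omega)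
    exact hmin ⟨by omega, by omega, by rw [show t - 1 + 1 = t by omega]; exact hcon⟩
  have hstrict : ∀ t, (u : ℕ) < t → t ≤ d → Ht w (u : ℕ) < Ht w t := by
    intro t h1 h2
    by_contra hcon
    push_neg at hcon
    rcases eq_or_lt_of_le (show (u : ℕ) + 1 ≤ t by omega) with h | h
    · rw [← h, hu1] at hcon; omega
    · obtain ⟨t', h1', h2', h3'⟩ := ivt_down (Ht w) (Ht_step_down w)
        (show (u : ℕ) + 1 ≤ t by omega) (by rw [hu1]; omega) hcon
      exact hne t' h1' (le_trans h2' h2) h3'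
  have hfr : FR w (u : ℕ) d := ⟨hs1, hs3, hstrict⟩
  have hfalse : w ⟨d, hs2⟩ = some false := by
    apply w_false_of_decr w hs2
    rw [hs3]
    exact hstrict d hs1 (le_refl d)
  rw [hpa]
  exact ⟨hs1, hfr, hfalse⟩

lemma pa_eq_of_fr (hw : Good n k w) {u : Fin n} (hu : w u = some true) {d : Fin n}
    (hfr : FR w (u : ℕ) (d : ℕ)) : pa w u = d := by
  have h1 := (pa_spec hw hu).2.1
  exact Fin.ext (FR.unique_right h1 hfr)

lemma exists_opener (hw : Good n k w) {d : Fin n} (hd : w d = some false) :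
    ∃ u : Fin n, w u = some true ∧ FR w (u : ℕ) (d : ℕ) := by
  classical
  have hdn : (d : ℕ) < n := d.isLt
  have hd1 : Ht w ((d : ℕ) + 1) = Ht w (d : ℕ) - 1 :=
    Ht_succ_of_false w hdn (by simpa using hd)
  set c := Ht w ((d : ℕ) + 1) with hc
  have hH0 : Ht w 0 = 0 := by unfold Ht; rw [cnt_zero, cnt_zero]; ring
  have hwit : ∃ t, 0 ≤ t ∧ t < (d : ℕ) ∧ Ht w t = c := by
    apply ivt_up (Ht w) (Ht_step_up w) (Nat.zero_le _)
    · rw [hH0]; exact Ht_nonneg hw _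
    · omega
  obtain ⟨t₀, -, ht₀d, ht₀⟩ := hwit
  set u := Nat.findGreatest (fun t => Ht w t = c) (d : ℕ) with hu
  have hspec : Ht w u = c :=
    Nat.findGreatest_spec (P := fun t => Ht w t = c) (le_of_lt ht₀d) ht₀
  have hule : u ≤ (d : ℕ) := Nat.findGreatest_le _
  have hund : u ≠ (d : ℕ) := by
    intro h
    rw [h] at hspec
    omega
  have hult : u < (d : ℕ) := lt_of_le_of_ne hule hund
  have hgr : ∀ s, u < s → s ≤ (d : ℕ) → Ht w s ≠ c := by
    intro s h1 h2
    exact Nat.findGreatest_is_greatest (P := fun t => Ht w t = c) h1 h2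
  have hu1 : Ht w (u + 1) = c + 1 := by
    have hne : Ht w (u + 1) ≠ c := hgr (u + 1) (Nat.lt_succ_self u) (by omega)
    rcases lt_trichotomy (Ht w (u + 1)) c with h | h | h
    · obtain ⟨s, hs1, hs2, hs3⟩ := ivt_up (Ht w) (Ht_step_up w)
        (show u + 1 ≤ (d : ℕ) by omega) (le_of_lt h) (by omega)
      exact absurd hs3 (hgr s (by omega) (by omega))
    · exact absurd h hne
    · have := Ht_step_up w u
      omega
  have hstrict : ∀ s, u < s → s ≤ (d : ℕ) → c < Ht w s := by
    intro s h1 h2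
    by_contra hcon
    push_neg at hcon
    rcases eq_or_lt_of_le (show u + 1 ≤ s by omega) with h | h
    · rw [← h, hu1] at hcon; omega
    · obtain ⟨s', hs1, hs2, hs3⟩ := ivt_down (Ht w) (Ht_step_down w)
        (show u + 1 ≤ s by omega) (by omega) hcon
      exact hgr s' (by omega) (by omega) hs3
  have hun2 : u < n := by omega
  have hwu : w ⟨u, hun2⟩ = some true := by
    apply w_true_of_incr w hun2
    rw [hu1, hspec]
    omega
  refine ⟨⟨u, hun2⟩, hwu, hult, hspec.symm, ?_⟩
  intro t h1 h2
  rw [show Ht w (((⟨u, hun2⟩ : Fin n)) : ℕ) = c from hspec]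
  exact hstrict t h1 h2

end GoodW


section Matching

variable {m : Finset (Finset (Fin n))}

noncomputable def pr (m : Finset (Finset (Fin n))) (i : Fin n) : Fin n :=
  if h : ∃ j, j ≠ i ∧ ({i, j} : Finset (Fin n)) ∈ m then h.choose else i

def wordOf (m : Finset (Finset (Fin n))) (i : Fin n) : Option Bool :=
  if ∃ j, i < j ∧ ({i, j} : Finset (Fin n)) ∈ m then some true
  else if ∃ j, j < i ∧ ({j, i} : Finset (Fin n)) ∈ m then some false
  else none

lemma wordOf_true_iff {i : Fin n} :
    wordOf m i = some true ↔ ∃ j, i < j ∧ ({i, j} : Finset (Fin n)) ∈ m := by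
  unfold wordOf
  constructor
  · intro h
    by_contra hcon
    rw [if_neg hcon] at h
    split_ifs at h <;> simp_all
  · intro h
    rw [if_pos h]

variable (hm : IsMatching n m)
include hm

lemma mem_unique {p q : Finset (Fin n)} (hp : p ∈ m) (hq : q ∈ m) {i : Fin n}
    (hip : i ∈ p) (hiq : i ∈ q) : p = q := by
  by_contra hne
  have := hm.2 hp hq hne
  exact Finset.disjoint_left.mp this hip hiq

lemma pair_two {p : Finset (Fin n)} (hp : p ∈ m) :
    ∃ a b : Fin n, a < b ∧ p = {a, b} := by
  obtain ⟨a, b, hne, rfl⟩ := Finset.card_eq_two.mp (hm.1 p hp)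
  rcases lt_or_gt_of_ne hne with h | h
  · exact ⟨a, b, h, rfl⟩
  · exact ⟨b, a, h, Finset.pair_comm a b⟩

lemma pair_eq {a b c d : Fin n} (h : ({a, b} : Finset (Fin n)) = {c, d}) (hab : a < b)
    (hcd : c < d) : a = c ∧ b = d := by
  have ha : a = c ∨ a = d := by
    have := (Finset.ext_iff.mp h a).mp (by simp)
    simpa using this
  have hb : b = c ∨ b = d := by
    have := (Finset.ext_iff.mp h b).mp (by simp)
    simpa using this
  rcases ha with h1 | h1 <;> rcases hb with h2 | h2
  · exact absurd hab (by rw [h1, h2]; exact lt_irrefl c)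
  · exact ⟨h1, h2⟩
  · exfalso
    rw [h1, h2] at hab
    exact absurd (lt_trans hcd hab) (lt_irrefl _)
  · exact absurd hab (by rw [h1, h2]; exact lt_irrefl d)

lemma partner_unique {a b c : Fin n} (h1 : ({a, b} : Finset (Fin n)) ∈ m)
    (h2 : ({a, c} : Finset (Fin n)) ∈ m) (hb : b ≠ a) (hc : c ≠ a) : b = c := by
  have heq : ({a, b} : Finset (Fin n)) = {a, c} :=
    mem_unique hm (i := a) h1 h2 (by simp) (by simp)
  have : b ∈ ({a, c} : Finset (Fin n)) := by rw [← heq]; simp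
  simp only [Finset.mem_insert, Finset.mem_singleton] at this
  rcases this with h | h
  · exact absurd h hb
  · exact h

lemma pr_pair {a b : Fin n} (h : ({a, b} : Finset (Fin n)) ∈ m) (hab : a ≠ b) :
    pr m a = b := by
  have hex : ∃ j, j ≠ a ∧ ({a, j} : Finset (Fin n)) ∈ m := ⟨b, hab.symm, h⟩
  rw [pr, dif_pos hex]
  exact partner_unique hm hex.choose_spec.2 h hex.choose_spec.1 hab.symm

lemma not_both {i : Fin n} (h2 : ∃ j, j < i ∧ ({j, i} : Finset (Fin n)) ∈ m) :
    ¬ ∃ j, i < j ∧ ({i, j} : Finset (Fin n)) ∈ m := by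
  rintro ⟨j', hj1', hj2'⟩
  obtain ⟨j, hj1, hj2⟩ := h2
  have heq : ({i, j'} : Finset (Fin n)) = {j, i} :=
    mem_unique hm (i := i) hj2' hj2 (by simp) (by simp)
  have : j ∈ ({i, j'} : Finset (Fin n)) := by rw [heq]; simp
  simp only [Finset.mem_insert, Finset.mem_singleton] at this
  rcases this with h | h
  · rw [h] at hj1; exact absurd hj1 (lt_irrefl _)
  · rw [h] at hj1; exact absurd (lt_trans hj1 hj1') (lt_irrefl _)

lemma wordOf_false_iff {i : Fin n} :
    wordOf m i = some false ↔ ∃ j, j < i ∧ ({j, i} : Finset (Fin n)) ∈ m := by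
  unfold wordOf
  constructor
  · intro h
    by_cases h1 : ∃ j, i < j ∧ ({i, j} : Finset (Fin n)) ∈ m
    · rw [if_pos h1] at h
      exact absurd h (by simp)
    · rw [if_neg h1] at h
      by_contra hcon
      rw [if_neg hcon] at h
      exact absurd h (by simp)
  · intro h
    rw [if_neg (not_both hm h), if_pos h]

lemma pr_of_opener {i : Fin n} (hi : wordOf m i = some true) :
    i < pr m i ∧ ({i, pr m i} : Finset (Fin n)) ∈ m ∧ wordOf m (pr m i) = some false := by
  obtain ⟨j, hij, hmem⟩ := (wordOf_true_iff (m := m)).mp hi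
  have hpr : pr m i = j := pr_pair hm hmem hij.ne
  rw [hpr]
  exact ⟨hij, hmem, (wordOf_false_iff hm).mpr ⟨i, hij, hmem⟩⟩

lemma pr_of_closer {i : Fin n} (hi : wordOf m i = some false) :
    pr m i < i ∧ ({pr m i, i} : Finset (Fin n)) ∈ m ∧ wordOf m (pr m i) = some true := by
  obtain ⟨j, hij, hmem⟩ := (wordOf_false_iff hm).mp hi
  have hpr : pr m i = j := pr_pair hm (by rw [Finset.pair_comm]; exact hmem) hij.ne'
  rw [hpr]
  exact ⟨hij, hmem, (wordOf_true_iff (m := m)).mpr ⟨i, hij, hmem⟩⟩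

lemma pr_invol {i : Fin n} (h : ({i, pr m i} : Finset (Fin n)) ∈ m) (hne : pr m i ≠ i) :
    pr m (pr m i) = i :=
  pr_pair hm (by rw [Finset.pair_comm]; exact h) hne

variable (hnc : NoncrossingMatching n m)
include hnc

omit hm in
/-- the crossing contradiction -/
lemma no_cross {a b c d : Fin n} (hab : a < b) (hbc : b < c) (hcd : c < d)
    (h1 : ({a, c} : Finset (Fin n)) ∈ m) (h2 : ({b, d} : Finset (Fin n)) ∈ m) : False :=
  hnc ⟨a, b, c, d, hab, hbc, hcd, h1, h2⟩

lemma closer_partner_in {u d : Fin n} (hud : u < d) (hmem : ({u, d} : Finset (Fin n)) ∈ m)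
    {c : Fin n} (hc : wordOf m c = some false) (hcu : u ≤ c) (hcd : c ≤ d) :
    u ≤ pr m c ∧ pr m c < c ∧ (c = d → pr m c = u) ∧ (c < d → u < pr m c) := by
  obtain ⟨hlt, hmem', -⟩ := pr_of_closer hm hc
  have hcu' : u < c := by
    rcases eq_or_lt_of_le hcu with h | h
    · exfalso
      have : wordOf m u = some true := (wordOf_true_iff (m := m)).mpr ⟨d, hud, hmem⟩
      rw [h] at this
      rw [this] at hc
      simp at hc
    · exact h
  rcases eq_or_lt_of_le hcd with hcase | hcase
  · subst hcase
    have : pr m c = u := by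
      apply partner_unique hm (b := pr m c) (by rw [Finset.pair_comm]; exact hmem') _ hlt.ne _
      · rw [Finset.pair_comm]; exact hmem
      · exact hud.ne
    rw [this]
    exact ⟨le_refl _, hcu', fun _ => rfl, fun h => absurd h (lt_irrefl _)⟩
  · have hu_lt : u < pr m c := by
      rcases lt_trichotomy (pr m c) u with h | h | h
      · exact absurd (no_cross hnc h hcu' hcase hmem' hmem) not_false
      · exfalso
        have : pr m c = u := h
        have hcd' : c = d := by
          have h2 : ({u, c} : Finset (Fin n)) ∈ m := by
            rw [← this]; exact hmem'
          exact partner_unique hm h2 hmem hcu'.ne' hud.ne'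
        rw [hcd'] at hcase
        exact absurd hcase (lt_irrefl _)
      · exact h
    exact ⟨le_of_lt hu_lt, hlt, fun h => absurd (h ▸ hcase) (lt_irrefl _), fun _ => hu_lt⟩

lemma card_interval_eq {u d : Fin n} (hud : u < d) (hmem : ({u, d} : Finset (Fin n)) ∈ m) :
    (Finset.univ.filter (fun i : Fin n =>
        (u : ℕ) ≤ (i : ℕ) ∧ (i : ℕ) < (d : ℕ) + 1 ∧ wordOf m i = some true)).card =
    (Finset.univ.filter (fun i : Fin n =>
        (u : ℕ) ≤ (i : ℕ) ∧ (i : ℕ) < (d : ℕ) + 1 ∧ wordOf m i = some false)).card := by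
  have hwd : wordOf m d = some false := (wordOf_false_iff hm).mpr ⟨u, hud, hmem⟩
  apply Finset.card_bij (fun a _ => pr m a)
  · intro a ha
    simp only [Finset.mem_filter, Finset.mem_univ, true_and] at ha ⊢
    obtain ⟨h1, h2, h3⟩ := ha
    obtain ⟨hlt, hmem', hcl⟩ := pr_of_opener hm h3
    refine ⟨le_trans h1 (le_of_lt hlt), ?_, hcl⟩
    rcases eq_or_lt_of_le h1 with hcase | hcase
    · have : u = a := Fin.ext hcase
      subst this
      rw [pr_pair hm hmem hud.ne]
      omega
    · have had : a < d := by
        rcases eq_or_lt_of_le (show (a : ℕ) ≤ (d : ℕ) by omega) with h | h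
        · exfalso
          have : a = d := Fin.ext h
          rw [this, hwd] at h3
          simp at h3
        · exact h
      by_contra hcon
      push_neg at hcon
      have hdp : d < pr m a := by
        have : (d : ℕ) < (pr m a : ℕ) := by omega
        exact this
      exact no_cross hnc hcase had hdp hmem hmem'
  · intro a ha a' ha' hpr
    simp only [Finset.mem_filter, Finset.mem_univ, true_and] at ha ha'
    obtain ⟨-, -, h3⟩ := ha
    obtain ⟨-, -, h3'⟩ := ha'
    obtain ⟨hlt, hmem', -⟩ := pr_of_opener hm h3
    obtain ⟨hlt', hmem'', -⟩ := pr_of_opener hm h3'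
    have e1 : pr m (pr m a) = a := pr_invol hm hmem' hlt.ne'
    have e2 : pr m (pr m a') = a' := pr_invol hm hmem'' hlt'.ne'
    rw [← e1, ← e2, hpr]
  · intro b hb
    simp only [Finset.mem_filter, Finset.mem_univ, true_and] at hb
    obtain ⟨h1, h2, h3⟩ := hb
    obtain ⟨hu1, hu2, hu3, hu4⟩ := closer_partner_in hm hnc hud hmem h3 h1 (by omega)
    obtain ⟨hlt, hmem', hop⟩ := pr_of_closer hm h3
    refine ⟨pr m b, ?_, ?_⟩
    · simp only [Finset.mem_filter, Finset.mem_univ, true_and]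
      exact ⟨hu1, by omega, hop⟩
    · exact pr_invol hm (by rw [Finset.pair_comm]; exact hmem') hu2.ne

lemma card_interval_lt {u d : Fin n} (hud : u < d) (hmem : ({u, d} : Finset (Fin n)) ∈ m)
    {t : ℕ} (h1t : (u : ℕ) < t) (h2t : t ≤ (d : ℕ)) :
    (Finset.univ.filter (fun i : Fin n =>
        (u : ℕ) ≤ (i : ℕ) ∧ (i : ℕ) < t ∧ wordOf m i = some false)).card + 1 ≤
    (Finset.univ.filter (fun i : Fin n =>
        (u : ℕ) ≤ (i : ℕ) ∧ (i : ℕ) < t ∧ wordOf m i = some true)).card := by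
  set O := Finset.univ.filter (fun i : Fin n =>
      (u : ℕ) ≤ (i : ℕ) ∧ (i : ℕ) < t ∧ wordOf m i = some true) with hO
  have huO : u ∈ O := by
    simp only [hO, Finset.mem_filter, Finset.mem_univ, true_and]
    exact ⟨le_refl _, h1t, (wordOf_true_iff (m := m)).mpr ⟨d, hud, hmem⟩⟩
  have hcard : (Finset.univ.filter (fun i : Fin n =>
      (u : ℕ) ≤ (i : ℕ) ∧ (i : ℕ) < t ∧ wordOf m i = some false)).card ≤ (O.erase u).card := by
    apply Finset.card_le_card_of_injOn (pr m)
    · intro c hc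
      simp only [Finset.mem_coe, Finset.mem_filter, Finset.mem_univ, true_and] at hc
      obtain ⟨h1, h2, h3⟩ := hc
      obtain ⟨hu1, hu2, hu3, hu4⟩ := closer_partner_in hm hnc hud hmem h3 h1 (by omega)
      have hcd : c < d := by
        have : (c : ℕ) < (d : ℕ) := by omega
        exact this
      have hne : pr m c ≠ u := (hu4 hcd).ne'
      rw [Finset.mem_coe, Finset.mem_erase]
      refine ⟨hne, ?_⟩
      simp only [hO, Finset.mem_filter, Finset.mem_univ, true_and]
      exact ⟨hu1, by omega, (pr_of_closer hm h3).2.2⟩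
    · intro c hc c' hc' hpr
      simp only [Finset.coe_filter, Set.mem_setOf_eq] at hc hc'
      obtain ⟨hlt, hmem', -⟩ := pr_of_closer hm hc.2.2.2
      obtain ⟨hlt', hmem'', -⟩ := pr_of_closer hm hc'.2.2.2
      have e1 : pr m (pr m c) = c := pr_invol hm (by rw [Finset.pair_comm]; exact hmem') hlt.ne
      have e2 : pr m (pr m c') = c' :=
        pr_invol hm (by rw [Finset.pair_comm]; exact hmem'') hlt'.ne
      rw [← e1, ← e2, hpr]
  rw [Finset.card_erase_of_mem huO] at hcard
  have : 1 ≤ O.card := Finset.card_pos.mpr ⟨u, huO⟩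
  omega

lemma fr_of_mem {u d : Fin n} (hud : u < d) (hmem : ({u, d} : Finset (Fin n)) ∈ m) :
    FR (wordOf m) (u : ℕ) (d : ℕ) := by
  have hud' : (u : ℕ) < (d : ℕ) := hud
  refine ⟨hud', ?_, ?_⟩
  · have e1 := cnt_split (wordOf m) true (show (u : ℕ) ≤ (d : ℕ) + 1 by omega)
    have e2 := cnt_split (wordOf m) false (show (u : ℕ) ≤ (d : ℕ) + 1 by omega)
    have e3 := card_interval_eq hm hnc hud hmem
    unfold Ht
    omega
  · intro t h1 h2
    have e1 := cnt_split (wordOf m) true (le_of_lt h1)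
    have e2 := cnt_split (wordOf m) false (le_of_lt h1)
    have e3 := card_interval_lt hm hnc hud hmem h1 h2
    unfold Ht
    omega

lemma good_wordOf : Good n m.card (wordOf m) := by
  refine ⟨?_, ?_, ?_⟩
  · intro t
    apply Finset.card_le_card_of_injOn (pr m)
    · intro c hc
      simp only [Finset.mem_coe, Finset.mem_filter, Finset.mem_univ, true_and] at hc ⊢
      obtain ⟨h1, h2⟩ := hc
      obtain ⟨hlt, -, hop⟩ := pr_of_closer hm h2
      exact ⟨lt_trans hlt h1, hop⟩
    · intro c hc c' hc' hpr
      simp only [Finset.coe_filter, Set.mem_setOf_eq] at hc hc'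
      obtain ⟨hlt, hmem', -⟩ := pr_of_closer hm hc.2.2
      obtain ⟨hlt', hmem'', -⟩ := pr_of_closer hm hc'.2.2
      have e1 : pr m (pr m c) = c := pr_invol hm (by rw [Finset.pair_comm]; exact hmem') hlt.ne
      have e2 : pr m (pr m c') = c' :=
        pr_invol hm (by rw [Finset.pair_comm]; exact hmem'') hlt'.ne
      rw [← e1, ← e2, hpr]
  · have htop : cnt (wordOf m) true n =
        (Finset.univ.filter (fun i : Fin n => wordOf m i = some true)).card := by
      unfold cnt
      congr 1
      ext i
      simp only [Finset.mem_filter, and_congr_right_iff]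
      intro _
      simp [i.isLt]
    rw [htop]
    apply Finset.card_bij (fun (a : Fin n) _ => ({a, pr m a} : Finset (Fin n)))
    · intro a ha
      simp only [Finset.mem_filter, Finset.mem_univ, true_and] at ha
      exact (pr_of_opener hm ha).2.1
    · intro a ha a' ha' heq
      simp only [Finset.mem_filter, Finset.mem_univ, true_and] at ha ha'
      exact (pair_eq hm heq (pr_of_opener hm ha).1 (pr_of_opener hm ha').1).1
    · intro p hp
      obtain ⟨a, b, hab, rfl⟩ := pair_two hm hp
      refine ⟨a, ?_, ?_⟩
      · simp only [Finset.mem_filter, Finset.mem_univ, true_and]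
        exact (wordOf_true_iff (m := m)).mpr ⟨b, hab, hp⟩
      · rw [pr_pair hm hp hab.ne]
  · have htop : cnt (wordOf m) false n =
        (Finset.univ.filter (fun i : Fin n => wordOf m i = some false)).card := by
      unfold cnt
      congr 1
      ext i
      simp only [Finset.mem_filter, and_congr_right_iff]
      intro _
      simp [i.isLt]
    rw [htop]
    apply Finset.card_bij (fun (a : Fin n) _ => ({pr m a, a} : Finset (Fin n)))
    · intro a ha
      simp only [Finset.mem_filter, Finset.mem_univ, true_and] at ha
      exact (pr_of_closer hm ha).2.1
    · intro a ha a' ha' heq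
      simp only [Finset.mem_filter, Finset.mem_univ, true_and] at ha ha'
      exact (pair_eq hm heq (pr_of_closer hm ha).1 (pr_of_closer hm ha').1).2
    · intro p hp
      obtain ⟨a, b, hab, rfl⟩ := pair_two hm hp
      refine ⟨b, ?_, ?_⟩
      · simp only [Finset.mem_filter, Finset.mem_univ, true_and]
        exact (wordOf_false_iff hm).mpr ⟨a, hab, hp⟩
      · rw [pr_pair hm (by rw [Finset.pair_comm]; exact hp) hab.ne']

end Matching


lemma cnt_top (w : Fin n → Option Bool) (b : Bool) :
    cnt w b n = (Finset.univ.filter (fun i : Fin n => w i = some b)).card := by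
  unfold cnt
  congr 1
  ext i
  simp only [Finset.mem_filter, and_congr_right_iff]
  intro _
  simp [i.isLt]

section Surj

variable {w : Fin n → Option Bool}

noncomputable def mOf (w : Fin n → Option Bool) : Finset (Finset (Fin n)) :=
  (Finset.univ.filter (fun u => w u = some true)).image
    (fun u => ({u, pa w u} : Finset (Fin n)))

lemma mem_mOf_iff {p : Finset (Fin n)} :
    p ∈ mOf w ↔ ∃ u, w u = some true ∧ p = ({u, pa w u} : Finset (Fin n)) := by
  unfold mOf
  simp only [Finset.mem_image, Finset.mem_filter, Finset.mem_univ, true_and]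
  constructor
  · rintro ⟨u, h1, rfl⟩; exact ⟨u, h1, rfl⟩
  · rintro ⟨u, h1, rfl⟩; exact ⟨u, h1, rfl⟩

variable (hw : Good n k w)
include hw

lemma pa_inj {u u' : Fin n} (hu : w u = some true) (hu' : w u' = some true)
    (h : pa w u = pa w u') : u = u' := by
  have h1 := (pa_spec hw hu).2.1
  have h2 := (pa_spec hw hu').2.1
  rw [h] at h1
  exact Fin.ext (FR.unique_left h1 h2)

lemma mOf_isMatching : IsMatching n (mOf w) := by
  constructor
  · intro p hp
    obtain ⟨u, hu, rfl⟩ := mem_mOf_iff.mp hp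
    rw [Finset.card_pair (pa_spec hw hu).1.ne]
  · intro p hp q hq hne
    obtain ⟨u, hu, rfl⟩ := mem_mOf_iff.mp hp
    obtain ⟨u', hu', rfl⟩ := mem_mOf_iff.mp hq
    have huu : u ≠ u' := by rintro rfl; exact hne rfl
    rw [Finset.disjoint_left]
    intro i hi1 hi2
    simp only [Finset.mem_insert, Finset.mem_singleton] at hi1 hi2
    have hfu := (pa_spec hw hu).2.2
    have hfu' := (pa_spec hw hu').2.2
    rcases hi1 with rfl | rfl <;> rcases hi2 with h | h
    · exact huu h
    · rw [h] at hu; rw [hu] at hfu'; simp at hfu'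
    · rw [← h] at hu'; rw [hu'] at hfu; simp at hfu
    · exact huu (pa_inj hw hu hu' h)

lemma mOf_card : (mOf w).card = k := by
  unfold mOf
  rw [Finset.card_image_of_injOn]
  · rw [← hw.2.1, cnt_top]
  · intro u hu u' hu' heq
    simp only [Finset.coe_filter, Set.mem_setOf_eq, Finset.mem_univ, true_and] at hu hu'
    exact (pair_eq (mOf_isMatching hw) heq (pa_spec hw hu).1 (pa_spec hw hu').1).1

lemma mOf_nc : NoncrossingMatching n (mOf w) := by
  rintro ⟨a, b, c, d, hab, hbc, hcd, h1, h2⟩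
  obtain ⟨u, hu, he⟩ := mem_mOf_iff.mp h1
  obtain ⟨u', hu', he'⟩ := mem_mOf_iff.mp h2
  obtain ⟨e1, e2⟩ := pair_eq (mOf_isMatching hw) he (lt_trans hab hbc) (pa_spec hw hu).1
  obtain ⟨e1', e2'⟩ := pair_eq (mOf_isMatching hw) he' (lt_trans hbc hcd) (pa_spec hw hu').1
  have f1 : FR w (a : ℕ) (c : ℕ) := by
    rw [e1, e2]; exact (pa_spec hw hu).2.1
  have f2 : FR w (b : ℕ) (d : ℕ) := by
    rw [e1', e2']; exact (pa_spec hw hu').2.1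
  exact FR.noncross hab hbc hcd f1 f2

lemma wordOf_mOf : wordOf (mOf w) = w := by
  funext i
  rcases hv : w i with _ | b
  · unfold wordOf
    rw [if_neg, if_neg]
    · rintro ⟨j, hj1, hj2⟩
      obtain ⟨u, hu, he⟩ := mem_mOf_iff.mp hj2
      obtain ⟨e1, e2⟩ := pair_eq (mOf_isMatching hw) he hj1 (pa_spec hw hu).1
      rw [e2] at hv
      rw [(pa_spec hw hu).2.2] at hv
      simp at hv
    · rintro ⟨j, hj1, hj2⟩
      obtain ⟨u, hu, he⟩ := mem_mOf_iff.mp hj2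
      obtain ⟨e1, e2⟩ := pair_eq (mOf_isMatching hw) he hj1 (pa_spec hw hu).1
      rw [e1] at hv
      rw [hu] at hv
      simp at hv
  · cases b
    · obtain ⟨u, hu, hfr⟩ := exists_opener hw (by simpa using hv)
      have hpa : pa w u = i := pa_eq_of_fr hw hu hfr
      have hmem : ({u, i} : Finset (Fin n)) ∈ mOf w := by
        rw [← hpa]
        exact mem_mOf_iff.mpr ⟨u, hu, rfl⟩
      rw [wordOf_false_iff (mOf_isMatching hw)]
      exact ⟨u, hfr.1, hmem⟩
    · have hmem : ({i, pa w i} : Finset (Fin n)) ∈ mOf w :=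
        mem_mOf_iff.mpr ⟨i, hv, rfl⟩
      rw [wordOf_true_iff]
      exact ⟨pa w i, (pa_spec hw hv).1, hmem⟩

end Surj

lemma matching_subset {m m' : Finset (Finset (Fin n))} (hm : IsMatching n m)
    (hnc : NoncrossingMatching n m) (hm' : IsMatching n m')
    (hnc' : NoncrossingMatching n m') (heq : wordOf m = wordOf m') : m ⊆ m' := by
  intro p hp
  obtain ⟨a, b, hab, rfl⟩ := pair_two hm hp
  have f1 : FR (wordOf m) (a : ℕ) (b : ℕ) := fr_of_mem hm hnc hab hp
  have hopen : wordOf m' a = some true := by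
    rw [← heq]
    exact (wordOf_true_iff (m := m)).mpr ⟨b, hab, hp⟩
  obtain ⟨b', hab', hp'⟩ := (wordOf_true_iff (m := m')).mp hopen
  have f2 : FR (wordOf m) (a : ℕ) (b' : ℕ) := by
    rw [heq]
    exact fr_of_mem hm' hnc' hab' hp'
  have : b = b' := Fin.ext (FR.unique_right f1 f2)
  rw [this]
  exact hp'

lemma stepA :
    Nat.card {m : Finset (Finset (Fin n)) //
        IsMatching n m ∧ NoncrossingMatching n m ∧ m.card = k} =
      Nat.card {w : Fin n → Option Bool // Good n k w} := by
  apply Nat.card_eq_of_bijective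
    (f := fun x => ⟨wordOf x.1, by
      obtain ⟨m, hm, hnc, hcard⟩ := x
      exact hcard ▸ good_wordOf hm hnc⟩)
  constructor
  · rintro ⟨m, hm, hnc, hc⟩ ⟨m', hm', hnc', hc'⟩ h
    have heq : wordOf m = wordOf m' := congrArg Subtype.val h
    exact Subtype.ext (Finset.Subset.antisymm
      (matching_subset hm hnc hm' hnc' heq)
      (matching_subset hm' hnc' hm hnc heq.symm))
  · rintro ⟨w, hw⟩
    exact ⟨⟨mOf w, mOf_isMatching hw, mOf_nc hw, mOf_card hw⟩, Subtype.ext (wordOf_mOf hw)⟩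


/-! ### Step B -/

open DyckStep

def emb (b : Bool) : DyckStep := bif b then U else D

lemma emb_inj : Function.Injective emb := by
  intro a b h
  cases a <;> cases b <;> simp [emb] at h ⊢

def fOf (w : Fin n → Option Bool) : Fin n → Option DyckStep := fun i => (w i).map emb

def dyckListOf (w : Fin n → Option Bool) : List DyckStep :=
  (List.finRange n).filterMap (fOf w)

lemma take_filterMap_exists {α β : Type*} (f : α → Option β) :
    ∀ (l : List α) (j : ℕ), ∃ t, (l.filterMap f).take j = (l.take t).filterMap f := by
  intro l
  induction l with
  | nil => intro j; exact ⟨0, by simp⟩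
  | cons a l ih =>
    intro j
    cases h : f a with
    | none =>
      obtain ⟨t, ht⟩ := ih j
      exact ⟨t + 1, by simp [List.filterMap_cons, h, ht]⟩
    | some b =>
      cases j with
      | zero => exact ⟨0, by simp⟩
      | succ j =>
        obtain ⟨t, ht⟩ := ih j
        exact ⟨t + 1, by simp [List.filterMap_cons, h, List.take_succ_cons, ht]⟩

lemma filterMap_eq_on {α β : Type*} (f f' : α → Option β) :
    ∀ (l : List α), (∀ a ∈ l, (f a = none ↔ f' a = none)) →
      l.filterMap f = l.filterMap f' → ∀ a ∈ l, f a = f' a := by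
  intro l
  induction l with
  | nil => intro _ _ a ha; exact absurd ha List.not_mem_nil
  | cons a l ih =>
    intro hsupp heq b hb
    have hiff := hsupp a List.mem_cons_self
    have htail : List.filterMap f l = List.filterMap f' l ∧ f a = f' a := by
      cases h : f a with
      | none =>
        have h' : f' a = none := hiff.mp h
        simp only [List.filterMap_cons, h, h'] at heq
        exact ⟨heq, h'.symm⟩
      | some x =>
        cases h' : f' a with
        | none => exact absurd (hiff.mpr h') (by simp [h])
        | some x' =>
          simp only [List.filterMap_cons, h, h'] at heq
          obtain ⟨he1, he2⟩ := List.cons_eq_cons.mp heq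
          exact ⟨he2, congrArg some he1⟩
    rcases List.mem_cons.mp hb with rfl | hb'
    · exact htail.2
    · exact ih (fun c hc => hsupp c (List.mem_cons_of_mem _ hc)) htail.1 b hb'

lemma filterMap_ite {α β : Type*} (s : α → Prop) [DecidablePred s] (v : α → β) :
    ∀ l : List α, l.filterMap (fun i => if s i then some (v i) else none) =
      (l.filter (fun i => decide (s i))).map v := by
  intro l
  induction l with
  | nil => simp
  | cons a l ih =>
    by_cases h : s a <;> simp [List.filterMap_cons, List.filter_cons, h, ih]

lemma mem_take_finRange (i : Fin n) (t : ℕ) :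
    i ∈ (List.finRange n).take t ↔ (i : ℕ) < t := by
  rw [← List.mem_map_of_injective Fin.val_injective, List.map_take,
    (show (List.finRange n).map Fin.val = List.range n from
      List.ext_getElem (by simp) (by simp)), List.take_range, List.mem_range]
  have := i.isLt
  omega

lemma countP_take_finRange (p : Fin n → Prop) [DecidablePred p] (t : ℕ) :
    ((List.finRange n).take t).countP (fun i => decide (p i)) =
      (Finset.univ.filter (fun i : Fin n => (i : ℕ) < t ∧ p i)).card := by
  rw [List.countP_eq_length_filter]
  have hsub : (((List.finRange n).take t).filter (fun i => decide (p i))).Sublist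
      (List.finRange n) := List.filter_sublist.trans (List.take_sublist _ _)
  have hnd := (List.nodup_finRange n).sublist hsub
  rw [← List.toFinset_card_of_nodup hnd]
  congr 1
  ext i
  simp only [List.mem_toFinset, List.mem_filter, mem_take_finRange, decide_eq_true_eq,
    Finset.mem_filter, Finset.mem_univ, true_and]

lemma cnt_eq_countP (w : Fin n → Option Bool) (b : Bool) (t : ℕ) :
    cnt w b t = ((List.finRange n).take t).countP (fun i => decide (w i = some b)) :=
  (countP_take_finRange _ t).symm

lemma count_dyck (w : Fin n → Option Bool) (b : Bool) (t : ℕ) :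
    (((List.finRange n).take t).filterMap (fOf w)).count (emb b) = cnt w b t := by
  rw [List.count_filterMap, cnt_eq_countP]
  apply List.countP_congr
  intro i _
  cases h : w i with
  | none => simp [fOf, h]
  | some b' =>
    simp only [fOf, h, Option.map_some, beq_iff_eq, Option.some.injEq, decide_eq_true_eq]
    exact ⟨fun he => by rw [emb_inj he], fun he => by rw [he]⟩

lemma take_n_finRange : (List.finRange n).take n = List.finRange n :=
  List.take_of_length_le (le_of_eq List.length_finRange)

def dyckOf (w : Fin n → Option Bool) (hw : Good n k w) : DyckWord where
  toList := dyckListOf w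
  count_U_eq_count_D := by
    have h1 := count_dyck (n := n) w true n
    have h2 := count_dyck (n := n) w false n
    rw [take_n_finRange] at h1 h2
    show (dyckListOf w).count (emb true) = (dyckListOf w).count (emb false)
    unfold dyckListOf
    rw [h1, h2, hw.2.1, hw.2.2]
  count_D_le_count_U := by
    intro j
    obtain ⟨t, ht⟩ := take_filterMap_exists (fOf w) (List.finRange n) j
    show ((dyckListOf w).take j).count (emb false) ≤ ((dyckListOf w).take j).count (emb true)
    unfold dyckListOf
    rw [ht, count_dyck, count_dyck]
    exact hw.1 t

lemma semilength_dyckOf {w : Fin n → Option Bool} (hw : Good n k w) :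
    (dyckOf w hw).semilength = k := by
  have h1 := count_dyck (n := n) w true n
  rw [take_n_finRange] at h1
  show (dyckListOf w).count (emb true) = k
  unfold dyckListOf
  rw [h1, hw.2.1]

def supp (w : Fin n → Option Bool) : Finset (Fin n) :=
  Finset.univ.filter (fun i => w i ≠ none)

lemma supp_card {w : Fin n → Option Bool} (hw : Good n k w) : (supp w).card = 2 * k := by
  have hsplit : supp w = (Finset.univ.filter (fun i => w i = some true)) ∪
      (Finset.univ.filter (fun i => w i = some false)) := by
    ext i
    simp only [supp, Finset.mem_filter, Finset.mem_univ, true_and, Finset.mem_union]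
    cases h : w i with
    | none => simp
    | some b => cases b <;> simp
  rw [hsplit, Finset.card_union_of_disjoint]
  · rw [← cnt_top, ← cnt_top, hw.2.1, hw.2.2]
    omega
  · rw [Finset.disjoint_left]
    intro i hi hi'
    simp only [Finset.mem_filter, Finset.mem_univ, true_and] at hi hi'
    rw [hi] at hi'
    simp at hi'

lemma stepB :
    Nat.card {w : Fin n → Option Bool // Good n k w} =
      Nat.choose n (2 * k) * catalan k := by
  have hbij : Nat.card {w : Fin n → Option Bool // Good n k w} =
      Nat.card ({s : Finset (Fin n) // s.card = 2 * k} ×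
        {p : DyckWord // p.semilength = k}) := by
    apply Nat.card_eq_of_bijective
      (f := fun x => (⟨supp x.1, supp_card x.2⟩, ⟨dyckOf x.1 x.2, semilength_dyckOf x.2⟩))
    constructor
    · rintro ⟨w, hw⟩ ⟨w', hw'⟩ h
      rw [Prod.ext_iff, Subtype.ext_iff, Subtype.ext_iff] at h
      have h1 : supp w = supp w' := h.1
      have h2 : dyckListOf w = dyckListOf w' := congrArg DyckWord.toList h.2
      apply Subtype.ext
      funext i
      have hmem : ∀ j : Fin n, (fOf w j = none ↔ fOf w' j = none) := by
        intro j
        have : (w j ≠ none) ↔ (w' j ≠ none) := by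
          rw [show (w j ≠ none) ↔ j ∈ supp w by simp [supp],
            show (w' j ≠ none) ↔ j ∈ supp w' by simp [supp], h1]
        cases hj : w j <;> cases hj' : w' j <;>
          simp_all [fOf]
      have := filterMap_eq_on (fOf w) (fOf w') (List.finRange n)
        (fun a _ => hmem a) h2 i (List.mem_finRange i)
      have : Option.map emb (w i) = Option.map emb (w' i) := this
      exact Option.map_injective emb_inj this
    · rintro ⟨⟨s, hs⟩, ⟨p, hp⟩⟩
      set sl := s.sort (· ≤ ·) with hsl
      have hslen : sl.length = 2 * k := by rw [hsl, Finset.length_sort, hs]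
      have hplen : p.toList.length = 2 * k := by rw [← p.two_mul_semilength_eq_length, hp]
      set v : Fin n → DyckStep := fun i => p.toList.getD (sl.idxOf i) U with hv
      set w : Fin n → Option Bool :=
        fun i => if i ∈ s then some (decide (v i = U)) else none with hwdef
      have c0 : fOf w = fun i => if i ∈ s then some (v i) else none := by
        funext i
        by_cases h : i ∈ s
        · simp only [fOf, hwdef, if_pos h, Option.map_some]
          congr 1
          cases hvi : v i <;> simp [emb, hvi]
        · simp [fOf, hwdef, if_neg h]
      have c1 : (List.finRange n).filter (fun i => decide (i ∈ s)) = sl := by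
        apply fun h1 h2 h3 => List.Perm.eq_of_pairwise' (r := ((· ≤ ·) : Fin n → Fin n → Prop)) h2 h3 h1
        · apply List.perm_of_nodup_nodup_toFinset_eq
          · exact (List.nodup_finRange n).filter _
          · exact s.sort_nodup _
          · ext i
            simp [List.mem_toFinset, List.mem_filter, hsl]
        · exact List.Pairwise.imp le_of_lt
            (((List.pairwise_lt_finRange n).sublist List.filter_sublist))
        · exact s.pairwise_sort _
      have c2 : sl.map v = p.toList := by
        apply List.ext_getElem (by rw [List.length_map, hslen, hplen])
        intro j h1 h2
        rw [List.getElem_map]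
        have hnd : sl.Nodup := s.sort_nodup _
        have h1' : j < sl.length := by simpa using h1
        have hidx : sl.idxOf sl[j] = j := List.Nodup.idxOf_getElem hnd j h1'
        have hvv : v sl[j] = p.toList.getD (sl.idxOf sl[j]) U := rfl
        rw [hvv, hidx, List.getD_eq_getElem _ _ h2]
      have c3 : dyckListOf w = p.toList := by
        unfold dyckListOf
        rw [c0, filterMap_ite, c1, c2]
      have c4 : Good n k w := by
        refine ⟨?_, ?_, ?_⟩
        · intro t
          have hpre : (((List.finRange n).take t).filterMap (fOf w)) <+: p.toList := by
            rw [← c3]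
            exact (List.take_prefix t _).filterMap (fOf w)
          have he := List.prefix_iff_eq_take.mp hpre
          have hD := count_dyck (n := n) w false t
          have hU := count_dyck (n := n) w true t
          rw [← hD, ← hU, he]
          exact p.count_D_le_count_U _
        · have h1 := count_dyck (n := n) w true n
          rw [take_n_finRange] at h1
          rw [← h1]
          show (dyckListOf w).count (emb true) = k
          rw [c3]
          exact hp ▸ rfl
        · have h1 := count_dyck (n := n) w false n
          rw [take_n_finRange] at h1
          rw [← h1]
          show (dyckListOf w).count (emb false) = k
          rw [c3]
          rw [show (emb false) = D from rfl, ← DyckWord.semilength_eq_count_D, hp]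
      have c5 : supp w = s := by
        ext i
        simp only [supp, Finset.mem_filter, Finset.mem_univ, true_and, hwdef]
        by_cases h : i ∈ s <;> simp [h]
      refine ⟨⟨w, c4⟩, ?_⟩
      refine Prod.ext (Subtype.ext c5) (Subtype.ext (DyckWord.ext ?_))
      exact c3
  rw [hbij, Nat.card_prod, Nat.card_eq_fintype_card, Nat.card_eq_fintype_card,
    Fintype.card_finset_len, DyckWord.card_dyckWord_semilength_eq_catalan, Fintype.card_fin]

end NCM0

/-- The number of noncrossing matchings of `[n]` with exactly `k` pairs is
`C(n, 2k) · Catalan(k)`. -/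
theorem card_noncrossing_matchings_with_k_pairs (n k : ℕ) :
    Nat.card {m : Finset (Finset (Fin n)) //
        IsMatching n m ∧ NoncrossingMatching n m ∧ m.card = k} =
      Nat.choose n (2 * k) * catalan k :=
  (NCM0.stepA).trans NCM0.stepB
end
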